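/- arXiv:1508.00542 — 9 statements merged into one kernel-verified Lean document; each statement's English description precedes it below -/
import Mathlib

section
/- Let G and G' be simple graphs on the same finite vertex set V with the same degree sequence and G ≠ G'. Then the edge set of the symmetric difference E(G) △ E(G') can be partitioned into the edge sets of alternating circuits. -/
open SimpleGraph

variable {V : Type*}

/-- Degree of `v` in `G`, via `Set.ncard`. -/
noncomputable def gdeg (G : SimpleGraph V) (v : V) : ℕ := (G.neighborSet v).ncard

/-- `G` realizes the degree sequence `d`. -/
def IsRealization (G : SimpleGraph V) (d : V → ℕ) : Prop := ∀ v, gdeg G v = d v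

/-- Number of crossing edges of `G` w.r.t. the bipartition `(U, W)`. -/
noncomputable def crossCount (U W : Set V) (G : SimpleGraph V) : ℕ :=
  {e ∈ G.edgeSet | ∃ u ∈ U, ∃ w ∈ W, e = s(u, w)}.ncard

/-- Number of edges of `G` with one endpoint in `P` and the other in `Q`. -/
noncomputable def eCount (G : SimpleGraph V) (P Q : Set V) : ℕ :=
  {e ∈ G.edgeSet | ∃ p ∈ P, ∃ q ∈ Q, e = s(p, q)}.ncard

/-- `r(G, G')`, the number of edges of `G` that are not edges of `G'`. -/
noncomputable def rdist (G G' : SimpleGraph V) : ℕ := (G.edgeSet \ G'.edgeSet).ncard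

/-- `G'` is obtained from `G` by a swap all of whose four vertices lie in `A`. -/
def IsSwapWithin (A : Set V) (G G' : SimpleGraph V) : Prop :=
  ∃ a b c d : V, a ∈ A ∧ b ∈ A ∧ c ∈ A ∧ d ∈ A ∧
    a ≠ b ∧ a ≠ c ∧ a ≠ d ∧ b ≠ c ∧ b ≠ d ∧ c ≠ d ∧
    G.Adj a b ∧ G.Adj c d ∧ ¬ G.Adj b c ∧ ¬ G.Adj a d ∧
    G'.edgeSet = (G.edgeSet \ {s(a, b), s(c, d)}) ∪ {s(b, c), s(a, d)}

/-- `G'` is obtained from `G` by a swap. -/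
def IsSwap (G G' : SimpleGraph V) : Prop := IsSwapWithin Set.univ G G'

/-- `G'` is obtained from `G` by a double swap (two simultaneous disjoint swaps). -/
def IsDoubleSwap (G G' : SimpleGraph V) : Prop :=
  ∃ a b c d e f g h : V,
    List.Pairwise (· ≠ ·) [a, b, c, d, e, f, g, h] ∧
    G.Adj a b ∧ G.Adj c d ∧ G.Adj e f ∧ G.Adj g h ∧
    ¬ G.Adj b c ∧ ¬ G.Adj a d ∧ ¬ G.Adj f g ∧ ¬ G.Adj e h ∧
    G'.edgeSet = (G.edgeSet \ {s(a, b), s(c, d), s(e, f), s(g, h)}) ∪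
      {s(b, c), s(a, d), s(f, g), s(e, h)}

/-- The `i`-th edge of the closed walk whose vertices are listed (cyclically) by `c`. -/
def stepEdge (c : List V) (i : Fin c.length) : Sym2 V :=
  s(c.get i, c.get ⟨(i.val + 1) % c.length, Nat.mod_lt _ i.pos⟩)

/-- The set of edges of the closed walk listed by `c`. -/
def circuitEdges (c : List V) : Set (Sym2 V) := Set.range (stepEdge c)

/-- The vertex list `c` describes an alternating circuit of the pair `(G, G')`:
a closed walk of even positive length, with pairwise distinct edges, whose edges lie
alternately in `E(G) \ E(G')` and `E(G') \ E(G)`, visiting no vertex more than twice. -/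
def IsAltCircuit (G G' : SimpleGraph V) (c : List V) : Prop :=
  0 < c.length ∧ Even c.length ∧
  (∀ i j : Fin c.length, stepEdge c i = stepEdge c j → i = j) ∧
  (∀ i : Fin c.length, i.val % 2 = 0 → stepEdge c i ∈ G.edgeSet \ G'.edgeSet) ∧
  (∀ i : Fin c.length, i.val % 2 = 1 → stepEdge c i ∈ G'.edgeSet \ G.edgeSet) ∧
  (∀ v : V, {i : Fin c.length | c.get i = v}.ncard ≤ 2)

/-- A decomposition of `E(G) △ E(G')` into (edge sets of) alternating circuits. -/
def IsAltCircuitDecomp (G G' : SimpleGraph V) (𝒞 : Finset (List V)) : Prop :=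
  (∀ c ∈ 𝒞, IsAltCircuit G G' c) ∧
  (∀ c ∈ 𝒞, ∀ c' ∈ 𝒞, c ≠ c' → Disjoint (circuitEdges c) (circuitEdges c')) ∧
  (⋃ c ∈ 𝒞, circuitEdges c) = symmDiff G.edgeSet G'.edgeSet

/-- Number of edges of `G` whose endpoints have classes `P` and `Q` under `π`. -/
noncomputable def wcount {C : Type*} (π : V → C) (G : SimpleGraph V) (P Q : C) : ℕ :=
  {e ∈ G.edgeSet | ∃ x y : V, e = s(x, y) ∧ π x = P ∧ π y = Q}.ncard

/-- Sum of the degree sequence over a class. -/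
noncomputable def Dsum (d : V → ℕ) (U : Set V) : ℕ := ∑ᶠ v ∈ U, d v

/-- `G` is weakly consistent with the cycle skeleton on the classes `U 0, …, U (n-1)`. -/
def WeaklyCycleConsistent (n : ℕ) [NeZero n] (U : Fin n → Set V) (G : SimpleGraph V) : Prop :=
  ∀ e ∈ G.edgeSet, ∃ (i : Fin n) (x y : V), e = s(x, y) ∧ x ∈ U i ∧ y ∈ U (i + 1)

/-- `G` is weakly consistent with the skeleton graph `S` on the classes `U`. -/
def WeaklyConsistent {C : Type*} (U : C → Set V) (S : SimpleGraph C) (G : SimpleGraph V) : Prop :=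
  ∀ e ∈ G.edgeSet, ∃ (P Q : C) (x y : V), S.Adj P Q ∧ e = s(x, y) ∧ x ∈ U P ∧ y ∈ U Q

/-- `G'` is obtained from `G` by an `F`-swap all of whose vertices lie in `A`:
the edges and non-chord-restricted non-edges are exchanged along an alternating
circuit of chords `c` in which every parity-crossing non-circuit pair is forbidden. -/
def IsFSwapWithin (A : Set V) (F : Set (Sym2 V)) (G G' : SimpleGraph V) : Prop :=
  ∃ c : List V, (∀ v ∈ c, v ∈ A) ∧ 0 < c.length ∧ Even c.length ∧
    (∀ i j : Fin c.length, stepEdge c i = stepEdge c j → i = j) ∧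
    (∀ i : Fin c.length, i.val % 2 = 0 → stepEdge c i ∈ G.edgeSet) ∧
    (∀ i : Fin c.length, i.val % 2 = 1 → stepEdge c i ∉ G.edgeSet ∧ stepEdge c i ∉ F) ∧
    (∀ i j : Fin c.length, i.val % 2 ≠ j.val % 2 → c.get i ≠ c.get j →
      s(c.get i, c.get j) ∉ circuitEdges c → s(c.get i, c.get j) ∈ F) ∧
    G'.edgeSet = (G.edgeSet \ {e | ∃ i : Fin c.length, i.val % 2 = 0 ∧ e = stepEdge c i}) ∪
      {e | ∃ i : Fin c.length, i.val % 2 = 1 ∧ e = stepEdge c i}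

/-!
Colour the edges of `E(G) \ E(G')` red and those of `E(G') \ E(G)` blue. Equal degrees mean that
every vertex meets as many red as blue edges. Hence an alternating trail that starts with a red edge
can always be extended unless it has returned to its start after an even number of steps: at every
earlier visit the trail used one edge of each colour. A shortest alternating closed walk visits no
vertex three times, since two of three visits would have positions of equal parity and the piece
between them would be a shorter alternating closed walk. Removing its edges keeps every vertex
balanced, and induction on the number of edges finishes the decomposition.
-/

open Finset

section AltWalk

variable {V : Type*} {R B : Finset (Sym2 V)} {f : ℕ → V} {k n : ℕ}

def walkEdge (f : ℕ → V) (i : ℕ) : Sym2 V := s(f i, f (i + 1))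

lemma mem_walkEdge {v : V} {i : ℕ} : v ∈ walkEdge f i ↔ f i = v ∨ f (i + 1) = v := by
  simp [walkEdge, eq_comm]

def altColor (R B : Finset (Sym2 V)) (i : ℕ) : Finset (Sym2 V) := if i % 2 = 0 then R else B

lemma altColor_of_mod_eq {i j : ℕ} (h : i % 2 = j % 2) : altColor R B i = altColor R B j := by
  simp [altColor, h]

lemma disjoint_altColor (hRB : Disjoint R B) {i j : ℕ} (h : i % 2 ≠ j % 2) :
    Disjoint (altColor R B i) (altColor R B j) := by
  unfold altColor; split_ifs <;> first | omega | exact hRB | exact hRB.symm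

structure IsAltTrail (R B : Finset (Sym2 V)) (f : ℕ → V) (k : ℕ) : Prop where
  injOn : Set.InjOn (walkEdge f) (Set.Iio k)
  mem_altColor : ∀ i < k, walkEdge f i ∈ altColor R B i

structure IsAltClosedWalk (R B : Finset (Sym2 V)) (f : ℕ → V) (n : ℕ) : Prop
    extends IsAltTrail R B f n where
  pos : 0 < n
  even : n % 2 = 0
  closed : f n = f 0

lemma isAltTrail_zero (R B : Finset (Sym2 V)) (f : ℕ → V) : IsAltTrail R B f 0 :=
  ⟨by simp, by simp⟩

lemma IsAltTrail.snoc (ht : IsAltTrail R B f k) {w : V} (hw : s(f k, w) ∈ altColor R B k)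
    (hnew : ∀ i < k, walkEdge f i ≠ s(f k, w)) :
    IsAltTrail R B (Function.update f (k + 1) w) (k + 1) := by
  have hlt : ∀ i < k, walkEdge (Function.update f (k + 1) w) i = walkEdge f i := fun i hi => by
    simp [walkEdge, Function.update_of_ne (show i ≠ k + 1 by omega),
      Function.update_of_ne (show i + 1 ≠ k + 1 by omega)]
  have hk : walkEdge (Function.update f (k + 1) w) k = s(f k, w) := by simp [walkEdge]
  constructor
  · rw [Set.Iio_add_one_eq_Iic, ← Set.Iio_insert, Set.injOn_insert Set.self_notMem_Iio, hk]
    refine ⟨ht.injOn.congr fun i hi => (hlt i hi).symm, ?_⟩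
    rintro ⟨i, hi, he⟩
    exact hnew i hi (by rwa [hlt i hi] at he)
  · intro i hi
    rcases Nat.lt_succ_iff_lt_or_eq.mp hi with hi | rfl
    · rw [hlt i hi]; exact ht.mem_altColor i hi
    · rwa [hk]

/-- Cutting a closed walk at two visits of one vertex at positions of equal parity leaves the
closed walk between them, read from a start point of even offset so that colours are kept. -/
lemma IsAltClosedWalk.shrink (h : IsAltClosedWalk R B f n) {i j : ℕ} (hij : i < j) (hj : j < n)
    (hpar : i % 2 = j % 2) (hv : f i = f j) :
    IsAltClosedWalk R B (fun t => f (i + (i + t) % (j - i))) (j - i) := by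
  set m := j - i
  have hm : 0 < m := by omega
  have hme : m % 2 = 0 := by omega
  have hedge : ∀ t, walkEdge (fun t => f (i + (i + t) % m)) t = walkEdge f (i + (i + t) % m) := by
    intro t
    have hlt := Nat.mod_lt (i + t) hm
    have h1 : 1 % m = 1 := Nat.mod_eq_of_lt (by omega)
    simp only [walkEdge, ← add_assoc, Nat.add_mod_eq_ite (m := i + t), h1]
    split_ifs with hwrap
    · rw [show (i + t) % m + 1 - m = 0 by omega, show i + (i + t) % m + 1 = j by omega,
        Nat.add_zero, hv]
    · rfl
  have hidx : ∀ t, i + (i + t) % m < n := fun t => by have := Nat.mod_lt (i + t) hm; omega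
  refine ⟨⟨fun t ht s hs hts => ?_, fun t _ => ?_⟩, hm, hme, by simp⟩
  · rw [hedge, hedge] at hts
    have := h.injOn (hidx t) (hidx s) hts
    have hmod : t % m = s % m :=
      Nat.ModEq.add_left_cancel' i (by simpa using this : (i + t) % m = (i + s) % m)
    rwa [Nat.mod_eq_of_lt ht, Nat.mod_eq_of_lt hs] at hmod
  · have := Nat.mod_mod_of_dvd (i + t) (Nat.dvd_of_mod_eq_zero hme)
    rw [hedge, altColor_of_mod_eq (show t % 2 = (i + (i + t) % m) % 2 by omega)]
    exact h.mem_altColor _ (hidx t)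

lemma IsAltClosedWalk.stepEdge_map (h : IsAltClosedWalk R B f n)
    (i : Fin ((List.range n).map f).length) :
    stepEdge ((List.range n).map f) i = walkEdge f i := by
  have hi : (i : ℕ) < n := by simpa using i.isLt
  simp only [stepEdge, walkEdge, List.get_eq_getElem, List.getElem_map, List.getElem_range,
    List.length_map, List.length_range]
  rcases Nat.lt_or_ge (i + 1) n with hlt | hge
  · rw [Nat.mod_eq_of_lt hlt]
  · rw [show (i : ℕ) + 1 = n by omega, Nat.mod_self, h.closed]

end AltWalk

section AltCycle

variable {V : Type*} {R B R' B' : Set (Sym2 V)} {c : List V}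

/-- `IsAltCircuit G G'` is `IsAltCycle (G.edgeSet \ G'.edgeSet) (G'.edgeSet \ G.edgeSet)`. -/
def IsAltCycle (R B : Set (Sym2 V)) (c : List V) : Prop :=
  0 < c.length ∧ Even c.length ∧
  (∀ i j : Fin c.length, stepEdge c i = stepEdge c j → i = j) ∧
  (∀ i : Fin c.length, i.val % 2 = 0 → stepEdge c i ∈ R) ∧
  (∀ i : Fin c.length, i.val % 2 = 1 → stepEdge c i ∈ B) ∧
  (∀ v : V, {i : Fin c.length | c.get i = v}.ncard ≤ 2)

def IsAltCycleDecomp (R B : Set (Sym2 V)) (𝒞 : Finset (List V)) : Prop :=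
  (∀ c ∈ 𝒞, IsAltCycle R B c) ∧
  (∀ c ∈ 𝒞, ∀ c' ∈ 𝒞, c ≠ c' → Disjoint (circuitEdges c) (circuitEdges c')) ∧
  (⋃ c ∈ 𝒞, circuitEdges c) = R ∪ B

lemma IsAltCycle.mono (hR : R ⊆ R') (hB : B ⊆ B') (h : IsAltCycle R B c) : IsAltCycle R' B' c :=
  ⟨h.1, h.2.1, h.2.2.1, fun i hi => hR (h.2.2.2.1 i hi), fun i hi => hB (h.2.2.2.2.1 i hi),
    h.2.2.2.2.2⟩

lemma IsAltCycle.circuitEdges_subset (h : IsAltCycle R B c) : circuitEdges c ⊆ R ∪ B := by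
  rintro _ ⟨i, rfl⟩
  rcases Nat.mod_two_eq_zero_or_one i with hi | hi
  exacts [Or.inl (h.2.2.2.1 i hi), Or.inr (h.2.2.2.2.1 i hi)]

lemma IsAltCycleDecomp.insert [DecidableEq V] {𝒞 : Finset (List V)} (hc : IsAltCycle R B c)
    (h : IsAltCycleDecomp (R \ circuitEdges c) (B \ circuitEdges c) 𝒞) :
    IsAltCycleDecomp R B (insert c 𝒞) := by
  obtain ⟨hcyc, hdisj, hunion⟩ := h
  have hdisj_c : ∀ c' ∈ 𝒞, Disjoint (circuitEdges c) (circuitEdges c') := fun c' hc' =>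
    Set.disjoint_of_subset_right (hunion ▸ Set.subset_biUnion_of_mem hc')
      (by rw [← Set.union_sdiff_distrib]; exact Set.disjoint_sdiff_right)
  refine ⟨?_, ?_, ?_⟩
  · simp only [Finset.mem_insert, forall_eq_or_imp]
    exact ⟨hc, fun c' hc' => (hcyc c' hc').mono Set.sdiff_subset Set.sdiff_subset⟩
  · simp only [Finset.mem_insert, forall_eq_or_imp]
    exact ⟨⟨fun h => absurd rfl h, fun c' hc' _ => hdisj_c c' hc'⟩,
      fun c' hc' => ⟨fun _ => (hdisj_c c' hc').symm, hdisj c' hc'⟩⟩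
  · rw [Finset.set_biUnion_insert, hunion, ← Set.union_sdiff_distrib,
      Set.union_sdiff_cancel hc.circuitEdges_subset]

end AltCycle

section Balanced

variable {V : Type*} [DecidableEq V] {R B : Finset (Sym2 V)} {f : ℕ → V} {k n : ℕ}

def IsDegreeBalanced (R B : Finset (Sym2 V)) : Prop := ∀ v, #{e ∈ R | v ∈ e} = #{e ∈ B | v ∈ e}

lemma IsDegreeBalanced.card_altColor (h : IsDegreeBalanced R B) (i j : ℕ) (v : V) :
    #{e ∈ altColor R B i | v ∈ e} = #{e ∈ altColor R B j | v ∈ e} := by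
  unfold altColor; split_ifs <;> simp [h v]

lemma IsDegreeBalanced.eq_empty_of_left (h : IsDegreeBalanced ∅ B) : B = ∅ := by
  by_contra hB
  obtain ⟨e, he⟩ := nonempty_iff_ne_empty.mpr hB
  have := h e.out.1
  rw [filter_empty, card_empty, eq_comm, card_eq_zero, filter_eq_empty_iff] at this
  exact this he (Sym2.out_fst_mem e)

lemma card_filter_sdiff_add_card_filter_inter (S E : Finset (Sym2 V)) (v : V) :
    #{e ∈ S \ E | v ∈ e} + #{e ∈ S ∩ E | v ∈ e} = #{e ∈ S | v ∈ e} := by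
  rw [← card_sdiff_add_card_inter {e ∈ S | v ∈ e} E, filter_inter]
  congr 2
  ext e
  simp [and_right_comm]

lemma IsDegreeBalanced.sdiff {E : Finset (Sym2 V)} (h : IsDegreeBalanced R B)
    (hE : IsDegreeBalanced (R ∩ E) (B ∩ E)) : IsDegreeBalanced (R \ E) (B \ E) := fun v => by
  have hR := card_filter_sdiff_add_card_filter_inter R E v
  have hB := card_filter_sdiff_add_card_filter_inter B E v
  have := h v
  have := hE v
  omega

lemma altColor_subset_union (i : ℕ) : altColor R B i ⊆ R ∪ B := by
  unfold altColor; split_ifs <;> simp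

lemma IsAltTrail.not_isDiag (hloop : ∀ e ∈ R ∪ B, ¬ e.IsDiag) (ht : IsAltTrail R B f k) :
    ∀ i < k, f i ≠ f (i + 1) := fun i hi =>
  Sym2.mk_isDiag_iff.not.mp (hloop _ (altColor_subset_union i (ht.mem_altColor i hi)))

lemma IsAltTrail.le_card (ht : IsAltTrail R B f k) : k ≤ #(R ∪ B) := by
  simpa using card_le_card_of_injOn (s := range k) (walkEdge f)
    (fun i hi => altColor_subset_union i (ht.mem_altColor i (by simpa using hi)))
    (by simpa using ht.injOn)

def walkDegree (f : ℕ → V) (k p : ℕ) (v : V) : ℕ :=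
  #{i ∈ range k | i % 2 = p ∧ v ∈ walkEdge f i}

lemma walkDegree_succ (k p : ℕ) (v : V) : walkDegree f (k + 1) p v =
    walkDegree f k p v + if k % 2 = p ∧ v ∈ walkEdge f k then 1 else 0 := by
  simp only [walkDegree, card_filter, sum_range_succ]

/-- Each interior visit of `v` meets one edge of each parity; only the two ends are unmatched. -/
lemma walkDegree_add_eq (f : ℕ → V) (v : V) (hloop : ∀ i < k, f i ≠ f (i + 1)) :
    walkDegree f k 0 v + (if k % 2 = 0 ∧ f k = v then 1 else 0) =
      walkDegree f k 1 v + (if f 0 = v then 1 else 0) + (if k % 2 = 1 ∧ f k = v then 1 else 0) := by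
  induction k with
  | zero => simp [walkDegree]
  | succ k ih =>
    have hk := hloop k k.lt_add_one
    have ih := ih fun i hi => hloop i (by omega)
    simp only [walkDegree_succ, mem_walkEdge]
    by_cases h1 : f k = v <;> by_cases h2 : f (k + 1) = v
    · exact absurd (h1.trans h2.symm) hk
    all_goals
      simp only [h1, h2, and_true, and_false, or_true, or_false] at ih ⊢
      split_ifs at ih ⊢ <;> omega

lemma IsAltTrail.walkDegree_le (ht : IsAltTrail R B f k) (p : ℕ) (v : V) :
    walkDegree f k p v ≤ #{e ∈ altColor R B p | v ∈ e} := by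
  refine card_le_card_of_injOn (walkEdge f) (fun i hi => ?_) (ht.injOn.mono fun i hi => ?_)
  · simp only [coe_filter, mem_range, Set.mem_ofPred_eq] at hi ⊢
    rw [altColor_of_mod_eq (show p % 2 = i % 2 by omega)]
    exact ⟨ht.mem_altColor i hi.1, hi.2.2⟩
  · simp only [coe_filter, mem_range, Set.mem_ofPred_eq] at hi
    exact hi.1

lemma IsAltTrail.exists_extend (hRB : Disjoint R B) (hloop : ∀ e ∈ R ∪ B, ¬ e.IsDiag)
    (hbal : IsDegreeBalanced R B) (ht : IsAltTrail R B f k) (hopen : ¬ (k % 2 = 0 ∧ f k = f 0)) :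
    ∃ g, IsAltTrail R B g (k + 1) := by
  have hkey := walkDegree_add_eq f (f k) (ht.not_isDiag hloop)
  have hlt : walkDegree f k (k % 2) (f k) < #{e ∈ altColor R B k | f k ∈ e} := by
    calc walkDegree f k (k % 2) (f k) < walkDegree f k ((k + 1) % 2) (f k) := by
          rcases Nat.mod_two_eq_zero_or_one k with h | h
          · have : f 0 ≠ f k := fun h' => hopen ⟨h, h'.symm⟩
            simp [h, this, show (k + 1) % 2 = 1 by omega] at hkey ⊢
            omega
          · simp [h, show (k + 1) % 2 = 0 by omega] at hkey ⊢
            split_ifs at hkey <;> omega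
      _ ≤ #{e ∈ altColor R B ((k + 1) % 2) | f k ∈ e} := ht.walkDegree_le _ _
      _ = #{e ∈ altColor R B k | f k ∈ e} := hbal.card_altColor _ _ _
  obtain ⟨b, hb, hbnew⟩ := exists_mem_notMem_of_card_lt_card (card_image_le.trans_lt hlt)
  rw [mem_filter] at hb
  obtain ⟨w, rfl⟩ := Sym2.mem_iff_exists.mp hb.2
  refine ⟨_, ht.snoc hb.1 fun i hi he => ?_⟩
  rcases eq_or_ne (i % 2) (k % 2) with hp | hp
  · exact hbnew (mem_image.mpr ⟨i, mem_filter.mpr ⟨mem_range.mpr hi, hp, he ▸ hb.2⟩, he⟩)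
  · exact disjoint_left.mp (disjoint_altColor hRB hp) (ht.mem_altColor i hi) (he ▸ hb.1)

/-- A longest alternating trail cannot be extended, so it closes up after an even number of steps. -/
lemma exists_isAltClosedWalk (hRB : Disjoint R B) (hloop : ∀ e ∈ R ∪ B, ¬ e.IsDiag)
    (hbal : IsDegreeBalanced R B) (hR : R.Nonempty) : ∃ f n, IsAltClosedWalk R B f n := by
  classical
  let P k := ∃ f : ℕ → V, IsAltTrail R B f k
  obtain ⟨e, he⟩ := hR
  have hP1 : P 1 := by
    induction e using Sym2.ind with | _ a w =>
    exact ⟨_, (isAltTrail_zero R B fun _ => a).snoc (w := w) (by simpa [altColor] using he)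
      (by simp)⟩
  have h1 : 1 ≤ #(R ∪ B) := hP1.elim fun _ ht => ht.le_card
  set m := Nat.findGreatest P #(R ∪ B)
  obtain ⟨f, hf⟩ : P m := Nat.findGreatest_spec h1 hP1
  have hclosed : m % 2 = 0 ∧ f m = f 0 := by
    by_contra hopen
    obtain ⟨g, hg⟩ := hf.exists_extend hRB hloop hbal hopen
    exact Nat.findGreatest_is_greatest m.lt_succ_self hg.le_card ⟨g, hg⟩
  exact ⟨f, m, hf, Nat.le_findGreatest h1 hP1, hclosed.1, hclosed.2⟩

lemma exists_isAltClosedWalk_card_le_two (hex : ∃ f n, IsAltClosedWalk R B f n) :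
    ∃ f n, IsAltClosedWalk R B f n ∧ ∀ v, #{i ∈ range n | f i = v} ≤ 2 := by
  classical
  have hex' : ∃ n f, IsAltClosedWalk R B f n := let ⟨f, n, h⟩ := hex; ⟨n, f, h⟩
  obtain ⟨f, hf⟩ := Nat.find_spec hex'
  refine ⟨f, _, hf, fun v => ?_⟩
  by_contra! hv
  obtain ⟨a, ha, b, hb, hab, hpar⟩ := exists_ne_map_eq_of_card_lt_of_maps_to (t := range 2)
    (f := (· % 2)) (by simpa using hv) (fun i _ => by simp only [coe_range, Set.mem_Iio]; omega)
  simp only [mem_filter, mem_range] at ha hb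
  rcases hab.lt_or_gt with hlt | hlt
  · exact Nat.find_min hex' (show b - a < _ by omega)
      ⟨_, hf.shrink hlt hb.1 hpar (ha.2.trans hb.2.symm)⟩
  · exact Nat.find_min hex' (show a - b < _ by omega)
      ⟨_, hf.shrink hlt ha.1 hpar.symm (hb.2.trans ha.2.symm)⟩

namespace IsAltClosedWalk

lemma walkDegree_zero_eq_one (hloop : ∀ e ∈ R ∪ B, ¬ e.IsDiag) (h : IsAltClosedWalk R B f n)
    (v : V) : walkDegree f n 0 v = walkDegree f n 1 v := by
  have := walkDegree_add_eq f v (h.not_isDiag hloop)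
  simp only [h.even, h.closed, true_and, zero_ne_one, false_and, if_false] at this
  omega

lemma card_filter_altColor_inter (hRB : Disjoint R B) (h : IsAltClosedWalk R B f n) {p : ℕ}
    (hp : p < 2) (v : V) :
    #{e ∈ altColor R B p ∩ (range n).image (walkEdge f) | v ∈ e} = walkDegree f n p v := by
  have : {e ∈ altColor R B p ∩ (range n).image (walkEdge f) | v ∈ e} =
      ({i ∈ range n | i % 2 = p ∧ v ∈ walkEdge f i}).image (walkEdge f) := by
    ext e
    simp only [mem_filter, mem_inter, mem_image, mem_range]
    constructor
    · rintro ⟨⟨hc, i, hi, rfl⟩, hv⟩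
      refine ⟨i, ⟨hi, ?_, hv⟩, rfl⟩
      by_contra hne
      exact disjoint_left.mp (disjoint_altColor hRB (show i % 2 ≠ p % 2 by omega))
        (h.mem_altColor i hi) hc
    · rintro ⟨i, ⟨hi, rfl, hv⟩, rfl⟩
      exact ⟨⟨altColor_of_mod_eq (Nat.mod_mod i 2) ▸ h.mem_altColor i hi, i, hi, rfl⟩, hv⟩
  rw [this, card_image_of_injOn (h.injOn.mono fun i hi => by simp_all)]
  rfl

lemma isDegreeBalanced_inter (hRB : Disjoint R B) (hloop : ∀ e ∈ R ∪ B, ¬ e.IsDiag)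
    (h : IsAltClosedWalk R B f n) :
    IsDegreeBalanced (R ∩ (range n).image (walkEdge f)) (B ∩ (range n).image (walkEdge f)) :=
  fun v => (h.card_filter_altColor_inter hRB zero_lt_two v).trans <|
    (h.walkDegree_zero_eq_one hloop v).trans (h.card_filter_altColor_inter hRB one_lt_two v).symm

lemma circuitEdges_map (h : IsAltClosedWalk R B f n) :
    circuitEdges ((List.range n).map f) = ↑((range n).image (walkEdge f)) := by
  ext e
  simp only [circuitEdges, Set.mem_range, h.stepEdge_map, coe_image, coe_range, Set.mem_image,
    Set.mem_Iio]
  constructor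
  · rintro ⟨i, rfl⟩
    exact ⟨i, by simpa using i.isLt, rfl⟩
  · rintro ⟨i, hi, rfl⟩
    exact ⟨⟨i, by simpa using hi⟩, rfl⟩

lemma isAltCycle_map (h : IsAltClosedWalk R B f n) (hvis : ∀ v, #{i ∈ range n | f i = v} ≤ 2) :
    IsAltCycle ↑R ↑B ((List.range n).map f) := by
  have hlt (i : Fin ((List.range n).map f).length) : (i : ℕ) < n := by simpa using i.isLt
  refine ⟨by simpa using h.pos, by simpa [Nat.even_iff] using h.even, fun i j hij => ?_,
    fun i hi => ?_, fun i hi => ?_, fun v => ?_⟩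
  · rw [h.stepEdge_map, h.stepEdge_map] at hij
    exact Fin.ext (h.injOn (hlt i) (hlt j) hij)
  · simpa [h.stepEdge_map, altColor, hi] using h.mem_altColor i (hlt i)
  · simpa [h.stepEdge_map, altColor, hi] using h.mem_altColor i (hlt i)
  · calc _ ≤ (↑{i ∈ range n | f i = v} : Set ℕ).ncard :=
          Set.ncard_le_ncard_of_injOn Fin.val (fun i hi => by simp_all [hlt i])
            Fin.val_injective.injOn (Set.toFinite _)
      _ ≤ 2 := (Set.ncard_coe_finset _).trans_le (hvis v)

end IsAltClosedWalk

theorem exists_isAltCycleDecomp (hRB : Disjoint R B) (hloop : ∀ e ∈ R ∪ B, ¬ e.IsDiag)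
    (hbal : IsDegreeBalanced R B) : ∃ 𝒞 : Finset (List V), IsAltCycleDecomp ↑R ↑B 𝒞 := by
  induction hN : #(R ∪ B) using Nat.strong_induction_on generalizing R B with | _ N ih
  rcases R.eq_empty_or_nonempty with rfl | hR
  · rw [hbal.eq_empty_of_left]
    exact ⟨∅, by simp [IsAltCycleDecomp]⟩
  obtain ⟨f, n, hf, hvis⟩ :=
    exists_isAltClosedWalk_card_le_two (exists_isAltClosedWalk hRB hloop hbal hR)
  set E := (range n).image (walkEdge f)
  have hE : E ⊆ R ∪ B := fun e he => by
    obtain ⟨i, hi, rfl⟩ := mem_image.mp he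
    exact altColor_subset_union i (hf.mem_altColor i (mem_range.mp hi))
  have hlt : #(R \ E ∪ B \ E) < N := hN ▸ card_lt_card (union_sdiff_distrib R B E ▸
    sdiff_ssubset hE ((nonempty_range_iff.mpr hf.pos.ne').image _))
  obtain ⟨𝒞, h𝒞⟩ := ih _ hlt (hRB.mono sdiff_subset sdiff_subset)
    (fun e he => hloop e (union_subset_union sdiff_subset sdiff_subset he))
    (hbal.sdiff (hf.isDegreeBalanced_inter hRB hloop)) rfl
  refine ⟨insert _ 𝒞, IsAltCycleDecomp.insert (hf.isAltCycle_map hvis) ?_⟩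
  rwa [hf.circuitEdges_map, ← coe_sdiff, ← coe_sdiff]

end Balanced

section Graph

variable {V : Type*} [Fintype V] [DecidableEq V]

lemma gdeg_eq_card_incidenceFinset (G : SimpleGraph V) [DecidableRel G.Adj] (v : V) :
    gdeg G v = #(G.incidenceFinset v) := by
  rw [card_incidenceFinset_eq_degree, gdeg, Set.ncard_eq_toFinset_card',
    ← card_neighborFinset_eq_degree]
  rfl

lemma isDegreeBalanced_edgeFinset_sdiff (G G' : SimpleGraph V) [DecidableRel G.Adj]
    [DecidableRel G'.Adj] (hdeg : ∀ v, gdeg G v = gdeg G' v) :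
    IsDegreeBalanced (G.edgeFinset \ G'.edgeFinset) (G'.edgeFinset \ G.edgeFinset) := fun v => by
  have hfilter (H H' : SimpleGraph V) [DecidableRel H.Adj] [DecidableRel H'.Adj] :
      {e ∈ H.edgeFinset \ H'.edgeFinset | v ∈ e} = H.incidenceFinset v \ H'.incidenceFinset v := by
    ext e; simp [incidenceSet]; tauto
  rw [hfilter, hfilter]
  exact card_sdiff_comm (by rw [← gdeg_eq_card_incidenceFinset, ← gdeg_eq_card_incidenceFinset, hdeg])

lemma not_isDiag_of_mem_edgeFinset_sdiff_union (G G' : SimpleGraph V) [DecidableRel G.Adj]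
    [DecidableRel G'.Adj] :
    ∀ e ∈ (G.edgeFinset \ G'.edgeFinset) ∪ (G'.edgeFinset \ G.edgeFinset), ¬ e.IsDiag := by
  intro e he
  simp only [mem_union, mem_sdiff, mem_edgeFinset] at he
  rcases he with ⟨he, -⟩ | ⟨he, -⟩
  exacts [G.not_isDiag_of_mem_edgeSet he, G'.not_isDiag_of_mem_edgeSet he]

end Graph

theorem symmDiff_altCircuit_decomposition_general {V : Type*} [Fintype V] (G G' : SimpleGraph V)
    (hdeg : ∀ v, gdeg G v = gdeg G' v) :
    ∃ 𝒞 : Finset (List V), IsAltCircuitDecomp G G' 𝒞 := by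
  classical
  obtain ⟨𝒞, h𝒞⟩ := exists_isAltCycleDecomp disjoint_sdiff_sdiff
    (not_isDiag_of_mem_edgeFinset_sdiff_union G G') (isDegreeBalanced_edgeFinset_sdiff G G' hdeg)
  rw [coe_sdiff, coe_sdiff, coe_edgeFinset, coe_edgeFinset] at h𝒞
  exact ⟨𝒞, h𝒞⟩

/-- The symmetric difference of two distinct realizations of the same degree sequence can be
decomposed into alternating circuits. -/
theorem symmDiff_altCircuit_decomposition {V : Type*} [Fintype V] (G G' : SimpleGraph V)
    (hne : G ≠ G') (hdeg : ∀ v, gdeg G v = gdeg G' v) :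
    ∃ 𝒞 : Finset (List V), IsAltCircuitDecomp G G' 𝒞 :=
  symmDiff_altCircuit_decomposition_general G G' hdeg
end

section
/- Fix a bipartition of the finite vertex set V into two disjoint parts U and W. If the simple graph G' is obtained from the simple graph G by a single swap, then |ε(G) − ε(G')| ∈ {0, 2}. -/
open SimpleGraph

variable {V : Type*}

/-- A single swap changes the number of crossing edges by `0` or `2`. -/
theorem swap_crossCount_diff {V : Type*} [Fintype V] (U W : Set V)
    (hUW : Disjoint U W) (hcov : U ∪ W = Set.univ)
    (G G' : SimpleGraph V) (h : IsSwap G G') :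
    |(crossCount U W G : ℤ) - (crossCount U W G' : ℤ)| ∈ ({0, 2} : Set ℤ) := by
  classical
  obtain ⟨a, b, c, d, -, -, -, -, hab, hac, had', hbc, hbd, hcd,
    Gab, Gcd, nGbc, nGad, hE⟩ := h
  set X : Set (Sym2 V) := {e | ∃ u ∈ U, ∃ w ∈ W, e = s(u, w)} with hX
  have memX : ∀ x y : V, s(x, y) ∈ X ↔ (x ∈ U ∧ y ∈ W) ∨ (y ∈ U ∧ x ∈ W) := by
    intro x y
    constructor
    · rintro ⟨u, hu, w, hw, hxy⟩
      rw [Sym2.eq_iff] at hxy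
      rcases hxy with ⟨rfl, rfl⟩ | ⟨rfl, rfl⟩
      · exact Or.inl ⟨hu, hw⟩
      · exact Or.inr ⟨hu, hw⟩
    · rintro (⟨hx, hy⟩ | ⟨hy, hx⟩)
      · exact ⟨x, hx, y, hy, rfl⟩
      · exact ⟨y, hy, x, hx, Sym2.eq_swap⟩
  have cc : ∀ H : SimpleGraph V, crossCount U W H = (H.edgeSet ∩ X).ncard := by
    intro H
    have hs : {e ∈ H.edgeSet | ∃ u ∈ U, ∃ w ∈ W, e = s(u, w)} = H.edgeSet ∩ X := by
      ext e; simp [hX]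
    rw [crossCount, hs]
  set D : Set (Sym2 V) := {s(a, b), s(c, d)} with hD
  set A : Set (Sym2 V) := {s(b, c), s(a, d)} with hA
  have hne1 : s(a, b) ≠ s(c, d) := by
    rw [Ne, Sym2.eq_iff]
    rintro (⟨rfl, rfl⟩ | ⟨rfl, rfl⟩) <;> simp_all
  have hne2 : s(b, c) ≠ s(a, d) := by
    rw [Ne, Sym2.eq_iff]
    rintro (⟨rfl, rfl⟩ | ⟨rfl, rfl⟩) <;> simp_all
  have pairIn : ∀ e1 e2 : Sym2 V, e1 ≠ e2 →
      (({e1, e2} : Set (Sym2 V)) ∩ X).ncard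
        = (if e1 ∈ X then 1 else 0) + (if e2 ∈ X then 1 else 0) := by
    intro e1 e2 hne
    by_cases h1 : e1 ∈ X <;> by_cases h2 : e2 ∈ X <;> simp only [h1, h2, if_true, if_false]
    · have hset : ({e1, e2} : Set (Sym2 V)) ∩ X = {e1, e2} := by
        apply Set.inter_eq_left.mpr
        intro e he
        simp only [Set.mem_insert_iff, Set.mem_singleton_iff] at he
        rcases he with rfl | rfl <;> assumption
      rw [hset, Set.ncard_pair hne]
    · have hset : ({e1, e2} : Set (Sym2 V)) ∩ X = {e1} := by
        ext e
        simp only [Set.mem_inter_iff, Set.mem_insert_iff, Set.mem_singleton_iff]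
        constructor
        · rintro ⟨rfl | rfl, he⟩
          · rfl
          · exact absurd he h2
        · rintro rfl; exact ⟨Or.inl rfl, h1⟩
      rw [hset, Set.ncard_singleton]
    · have hset : ({e1, e2} : Set (Sym2 V)) ∩ X = {e2} := by
        ext e
        simp only [Set.mem_inter_iff, Set.mem_insert_iff, Set.mem_singleton_iff]
        constructor
        · rintro ⟨rfl | rfl, he⟩
          · exact absurd he h1
          · rfl
        · rintro rfl; exact ⟨Or.inr rfl, h2⟩
      rw [hset, Set.ncard_singleton]
    · have hset : ({e1, e2} : Set (Sym2 V)) ∩ X = ∅ := by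
        ext e
        simp only [Set.mem_inter_iff, Set.mem_insert_iff, Set.mem_singleton_iff,
          Set.mem_empty_iff_false, iff_false, not_and]
        rintro (rfl | rfl) <;> assumption
      rw [hset, Set.ncard_empty]
  have hDsub : D ∩ X ⊆ G.edgeSet ∩ X := by
    rintro e ⟨heD, heX⟩
    refine ⟨?_, heX⟩
    simp only [hD, Set.mem_insert_iff, Set.mem_singleton_iff] at heD
    rcases heD with rfl | rfl
    · exact Gab
    · exact Gcd
  have hsplit : G'.edgeSet ∩ X = ((G.edgeSet ∩ X) \ (D ∩ X)) ∪ (A ∩ X) := by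
    ext e
    simp only [hE, Set.mem_inter_iff, Set.mem_union, Set.mem_diff]
    tauto
  have hdisj : Disjoint ((G.edgeSet ∩ X) \ (D ∩ X)) (A ∩ X) := by
    rw [Set.disjoint_left]
    rintro e ⟨⟨heE, -⟩, -⟩ ⟨heA, -⟩
    simp only [hA, Set.mem_insert_iff, Set.mem_singleton_iff] at heA
    rcases heA with rfl | rfl
    · exact nGbc heE
    · exact nGad heE
  have heq : crossCount U W G'
      = (crossCount U W G - (D ∩ X).ncard) + (A ∩ X).ncard := by
    rw [cc, cc, hsplit, Set.ncard_union_eq hdisj (Set.toFinite _) (Set.toFinite _),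
      Set.ncard_diff hDsub (Set.toFinite _)]
  have hle : (D ∩ X).ncard ≤ crossCount U W G := by
    rw [cc]
    exact Set.ncard_le_ncard hDsub (Set.toFinite _)
  have hk1 := pairIn (s(a, b)) (s(c, d)) hne1
  have hk2 := pairIn (s(b, c)) (s(a, d)) hne2
  rw [← hD] at hk1
  rw [← hA] at hk2
  simp only [memX] at hk1 hk2
  have side : ∀ v : V, (v ∈ U ∧ v ∉ W) ∨ (v ∈ W ∧ v ∉ U) := by
    intro v
    by_cases hv : v ∈ U
    · exact Or.inl ⟨hv, fun hw => Set.disjoint_left.mp hUW hv hw⟩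
    · refine Or.inr ⟨?_, hv⟩
      have : v ∈ U ∪ W := hcov ▸ Set.mem_univ v
      rcases this with h' | h'
      · exact absurd h' hv
      · exact h'
  have key : ∀ k1 k2 : ℕ, (D ∩ X).ncard = k1 → (A ∩ X).ncard = k2 →
      (crossCount U W G : ℤ) - (crossCount U W G' : ℤ) = (k1 : ℤ) - k2 := by
    intro k1 k2 h1 h2
    rw [h1, h2] at heq
    rw [h1] at hle
    omega
  rcases side a with ⟨ha1, ha2⟩ | ⟨ha1, ha2⟩ <;>
    rcases side b with ⟨hb1, hb2⟩ | ⟨hb1, hb2⟩ <;>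
    rcases side c with ⟨hc1, hc2⟩ | ⟨hc1, hc2⟩ <;>
    rcases side d with ⟨hd1, hd2⟩ | ⟨hd1, hd2⟩ <;>
    simp only [ha1, ha2, hb1, hb2, hc1, hc2, hd1, hd2, true_and, and_true, false_and,
      and_false, or_self, or_true, true_or, or_false, false_or, if_true, if_false,
      not_true, not_false_iff] at hk1 hk2 <;>
    rw [Set.mem_insert_iff, Set.mem_singleton_iff, key _ _ hk1 hk2] <;>
    norm_num
end

section
/- Fix a bipartition of the finite vertex set V into two disjoint parts U and W, and let d : V → ℕ be a degree sequence. Let G and G' be realizations of d with ε(G) < ε(G'). Then for every integer ℓ with ε(G) ≤ ℓ ≤ ε(G') and ℓ ≡ ε(G) (mod 2), there exists a realization G'' of d with ε(G'') = ℓ. -/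
open SimpleGraph

variable {V : Type*}

section CCIVAux

lemma aux_eq_of_subset [Finite V] {G G' : SimpleGraph V}
    (hsub : G.edgeSet ⊆ G'.edgeSet) (hdeg : ∀ v, gdeg G v = gdeg G' v) : G = G' := by
  by_contra hne
  have hss : G.edgeSet ⊂ G'.edgeSet := ⟨hsub, fun h => hne (by
    apply SimpleGraph.edgeSet_inj.mp
    exact Set.Subset.antisymm hsub h)⟩
  obtain ⟨e, heG', heG⟩ := Set.exists_of_ssubset hss
  induction e with
  | h x y =>
    have hsubN : G.neighborSet x ⊆ G'.neighborSet x := by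
      intro u hu
      have : s(x,u) ∈ G.edgeSet := hu
      exact hsub this
    have hyx : y ∈ G'.neighborSet x := heG'
    have hyn : y ∉ G.neighborSet x := heG
    have : (G.neighborSet x).ncard < (G'.neighborSet x).ncard :=
      Set.ncard_lt_ncard ⟨hsubN, fun h => hyn (h hyx)⟩ (Set.toFinite _)
    exact absurd (hdeg x) (Nat.ne_of_lt this)

/-- the crossing predicate -/
def crossP (U W : Set V) : Set (Sym2 V) := {e | ∃ u ∈ U, ∃ w ∈ W, e = s(u, w)}

lemma crossCount_eq (U W : Set V) (G : SimpleGraph V) :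
    crossCount U W G = (G.edgeSet ∩ crossP U W).ncard := by
  rfl

lemma crossP_mem_iff {U W : Set V} (hUW : Disjoint U W) (hcov : U ∪ W = Set.univ)
    {x y : V} (hxy : x ≠ y) : s(x,y) ∈ crossP U W ↔ ((x ∈ U) ↔ ¬(y ∈ U)) := by
  constructor
  · rintro ⟨u, hu, w, hw, h⟩
    rw [Sym2.eq_iff] at h
    have hwU : w ∉ U := fun hc => (Set.disjoint_left.mp hUW hc) hw
    rcases h with ⟨hx, hy⟩ | ⟨hx, hy⟩
    · subst hx; subst hy; simp [hu, hwU]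
    · subst hx; subst hy
      constructor
      · intro h; exact absurd h hwU
      · intro hny; exact absurd hu hny
  · intro h
    by_cases hx : x ∈ U
    · have hy : y ∉ U := (h.mp hx)
      have hyW : y ∈ W := by
        have h2 := Set.mem_univ y; rw [← hcov] at h2
        rcases h2 with h2 | h2; exact absurd h2 hy; exact h2
      exact ⟨x, hx, y, hyW, rfl⟩
    · have hy : y ∈ U := by tauto
      have hxW : x ∈ W := by
        have h2 := Set.mem_univ x; rw [← hcov] at h2
        rcases h2 with h2 | h2; exact absurd h2 hx; exact h2
      exact ⟨y, hy, x, hxW, Sym2.eq_swap⟩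

open Classical in
lemma ncard_pair_inter (C : Set (Sym2 V)) {α β : Sym2 V} (h : α ≠ β) :
    (C ∩ {α, β}).ncard = (if α ∈ C then 1 else 0) + (if β ∈ C then 1 else 0) := by
  by_cases hα : α ∈ C <;> by_cases hβ : β ∈ C
  · have heq : C ∩ {α, β} = {α, β} := by
      apply Set.inter_eq_self_of_subset_right; intro e he
      rcases he with rfl | rfl; exact hα; exact hβ
    rw [heq, Set.ncard_pair h]; simp [hα, hβ]
  · have heq : C ∩ {α, β} = {α} := by
      ext e; constructor
      · rintro ⟨hc, rfl | rfl⟩; rfl; exact absurd hc hβ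
      · rintro rfl; exact ⟨hα, Or.inl rfl⟩
    rw [heq]; simp [hα, hβ]
  · have heq : C ∩ {α, β} = {β} := by
      ext e; constructor
      · rintro ⟨hc, rfl | rfl⟩; exact absurd hc hα; rfl
      · rintro rfl; exact ⟨hβ, Or.inr rfl⟩
    rw [heq]; simp [hα, hβ]
  · have heq : C ∩ {α, β} = ∅ := by
      ext e; constructor
      · rintro ⟨hc, rfl | rfl⟩; exact absurd hc hα; exact absurd hc hβ
      · rintro ⟨⟩
    rw [heq]; simp [hα, hβ]

lemma swap_edgeSet (G : SimpleGraph V) {a b c d : V} (hbc : b ≠ c) (had : a ≠ d) :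
    (fromEdgeSet ((G.edgeSet \ {s(a,b), s(c,d)}) ∪ {s(b,c), s(a,d)})).edgeSet
      = (G.edgeSet \ {s(a,b), s(c,d)}) ∪ {s(b,c), s(a,d)} := by
  rw [edgeSet_fromEdgeSet]
  apply Set.Subset.antisymm Set.diff_subset
  intro e he
  refine ⟨he, fun hdiag => ?_⟩
  rcases he with ⟨hG, _⟩ | h
  · exact (SimpleGraph.not_isDiag_of_mem_edgeSet G hG) hdiag
  · rcases h with rfl | rfl
    · exact hbc (Sym2.mk_isDiag_iff.mp hdiag)
    · exact had (Sym2.mk_isDiag_iff.mp hdiag)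

lemma deg_core [Finite V] {G H : SimpleGraph V} {a b c d : V}
    (hac : a ≠ c) (had : a ≠ d)
    (hGab : G.Adj a b) (hGad : ¬ G.Adj a d)
    (hE : H.edgeSet = (G.edgeSet \ {s(a,b), s(c,d)}) ∪ {s(b,c), s(a,d)}) :
    gdeg H a = gdeg G a := by
  have hab : a ≠ b := hGab.ne
  have hN : H.neighborSet a = insert d (G.neighborSet a \ {b}) := by
    ext u
    simp only [mem_neighborSet, Set.mem_insert_iff, Set.mem_diff, Set.mem_singleton_iff,
      ← mem_edgeSet]
    rw [hE]
    simp only [Set.mem_union, Set.mem_diff, Set.mem_insert_iff, Set.mem_singleton_iff]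
    constructor
    · rintro (⟨hG, hno⟩ | h)
      · right
        refine ⟨hG, fun hub => ?_⟩
        exact hno (Or.inl (by rw [hub]))
      · rcases h with h | h
        · rw [Sym2.eq_iff] at h
          rcases h with ⟨h1, _⟩ | ⟨h1, _⟩
          · exact absurd h1 hab
          · exact absurd h1 hac
        · left; exact Sym2.congr_right.mp h
    · rintro (rfl | ⟨hG, hub⟩)
      · right; right; rfl
      · left
        refine ⟨hG, fun hmem => ?_⟩
        rcases hmem with h | h
        · exact hub (Sym2.congr_right.mp h)
        · rw [Sym2.eq_iff] at h
          rcases h with ⟨h1, _⟩ | ⟨h1, _⟩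
          · exact hac h1
          · exact had h1
  have hdnm : d ∉ G.neighborSet a \ {b} := fun h => hGad h.1
  have hbm : b ∈ G.neighborSet a := hGab
  rw [gdeg, gdeg, hN, Set.ncard_insert_of_notMem hdnm (Set.toFinite _),
    ← Set.ncard_diff_singleton_add_one hbm (Set.toFinite _)]

lemma swap_deg [Finite V] {G H : SimpleGraph V} {a b c d : V}
    (hac : a ≠ c) (had2 : a ≠ d) (hbd : b ≠ d) (hbc2 : b ≠ c)
    (hGab : G.Adj a b) (hGcd : G.Adj c d) (hGbc : ¬ G.Adj b c) (hGad : ¬ G.Adj a d)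
    (hE : H.edgeSet = (G.edgeSet \ {s(a,b), s(c,d)}) ∪ {s(b,c), s(a,d)}) :
    ∀ v, gdeg H v = gdeg G v := by
  intro v
  have eab : s(b,a) = s(a,b) := Sym2.eq_swap
  have ecd : s(d,c) = s(c,d) := Sym2.eq_swap
  have ebc : s(c,b) = s(b,c) := Sym2.eq_swap
  have ead : s(d,a) = s(a,d) := Sym2.eq_swap
  by_cases hva : v = a
  · rw [hva]; exact deg_core hac had2 hGab hGad hE
  by_cases hvb : v = b
  · rw [hvb]
    refine deg_core hbd hbc2 hGab.symm (fun h => hGbc h) ?_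
    rw [hE, eab, ecd, Set.pair_comm (s(b,c)) (s(a,d))]
  by_cases hvc : v = c
  · rw [hvc]
    refine deg_core (Ne.symm hac) (Ne.symm hbc2) hGcd (fun h => hGbc h.symm) ?_
    rw [hE, ead, ebc, Set.pair_comm (s(a,b)) (s(c,d)), Set.pair_comm (s(b,c)) (s(a,d))]
  by_cases hvd : v = d
  · rw [hvd]
    refine deg_core (Ne.symm hbd) (Ne.symm had2) hGcd.symm (fun h => hGad h.symm) ?_
    rw [hE, eab, ecd, ebc, ead, Set.pair_comm (s(a,b)) (s(c,d)),
      Set.pair_comm (s(b,c)) (s(a,d))]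
  · have hN : H.neighborSet v = G.neighborSet v := by
      ext u
      simp only [mem_neighborSet, ← mem_edgeSet]
      rw [hE]
      simp only [Set.mem_union, Set.mem_diff, Set.mem_insert_iff, Set.mem_singleton_iff]
      constructor
      · rintro (⟨hG, _⟩ | h)
        · exact hG
        · rcases h with h | h <;> rw [Sym2.eq_iff] at h <;>
            rcases h with ⟨h1, _⟩ | ⟨h1, _⟩ <;> first
              | exact absurd h1 hva | exact absurd h1 hvb
              | exact absurd h1 hvc | exact absurd h1 hvd
      · intro hG
        refine Or.inl ⟨hG, fun hmem => ?_⟩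
        rcases hmem with h | h <;> rw [Sym2.eq_iff] at h <;>
          rcases h with ⟨h1, _⟩ | ⟨h1, _⟩ <;> first
            | exact absurd h1 hva | exact absurd h1 hvb
            | exact absurd h1 hvc | exact absurd h1 hvd
    rw [gdeg, gdeg, hN]

open Classical in
lemma swap_cross [Finite V] {U W : Set V} (hUW : Disjoint U W) (hcov : U ∪ W = Set.univ)
    {G H : SimpleGraph V} {a b c d : V}
    (hac : a ≠ c) (had2 : a ≠ d) (hbd : b ≠ d) (hbc2 : b ≠ c)
    (hGab : G.Adj a b) (hGcd : G.Adj c d) (hGbc : ¬ G.Adj b c) (hGad : ¬ G.Adj a d)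
    (hE : H.edgeSet = (G.edgeSet \ {s(a,b), s(c,d)}) ∪ {s(b,c), s(a,d)}) :
    crossCount U W H % 2 = crossCount U W G % 2 ∧
    crossCount U W H ≤ crossCount U W G + 2 ∧
    crossCount U W G ≤ crossCount U W H + 2 := by
  have hab : a ≠ b := hGab.ne
  have hcd : c ≠ d := hGcd.ne
  set C := crossP U W with hC
  have hαβ : s(a,b) ≠ s(c,d) := by
    intro h; rw [Sym2.eq_iff] at h
    rcases h with ⟨h1, _⟩ | ⟨h1, _⟩; exact hac h1; exact had2 h1
  have hγδ : s(b,c) ≠ s(a,d) := by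
    intro h; rw [Sym2.eq_iff] at h
    rcases h with ⟨h1, _⟩ | ⟨h1, h2⟩
    · exact hab h1.symm
    · exact hbd h1
  have key : H.edgeSet ∩ C = ((G.edgeSet ∩ C) \ {s(a,b), s(c,d)}) ∪
      (C ∩ ({s(b,c), s(a,d)} : Set _)) := by
    rw [hE]; ext e
    simp only [Set.mem_union, Set.mem_diff, Set.mem_inter_iff]
    tauto
  have hdisj : Disjoint ((G.edgeSet ∩ C) \ {s(a,b), s(c,d)}) (C ∩ ({s(b,c), s(a,d)} : Set _)) := by
    rw [Set.disjoint_left]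
    rintro e ⟨⟨heG, _⟩, _⟩ ⟨_, hpair⟩
    rcases hpair with rfl | rfl
    · exact hGbc heG
    · exact hGad heG
  have h1 : (H.edgeSet ∩ C).ncard = ((G.edgeSet ∩ C) \ {s(a,b), s(c,d)}).ncard +
      (C ∩ ({s(b,c), s(a,d)} : Set _)).ncard := by
    rw [key]; exact Set.ncard_union_eq hdisj (Set.toFinite _) (Set.toFinite _)
  have hsubpair : (G.edgeSet ∩ C) ∩ ({s(a,b), s(c,d)} : Set _) = C ∩ ({s(a,b), s(c,d)} : Set _) := by
    ext e
    simp only [Set.mem_inter_iff, Set.mem_insert_iff, Set.mem_singleton_iff]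
    constructor
    · rintro ⟨⟨_, h2⟩, h3⟩; exact ⟨h2, h3⟩
    · rintro ⟨h2, (rfl | rfl)⟩
      · exact ⟨⟨hGab, h2⟩, Or.inl rfl⟩
      · exact ⟨⟨hGcd, h2⟩, Or.inr rfl⟩
  have h2 : ((G.edgeSet ∩ C) \ {s(a,b), s(c,d)}).ncard =
      (G.edgeSet ∩ C).ncard - (C ∩ ({s(a,b), s(c,d)} : Set _)).ncard := by
    have : (G.edgeSet ∩ C) \ ({s(a,b), s(c,d)} : Set _) =
        (G.edgeSet ∩ C) \ ((G.edgeSet ∩ C) ∩ ({s(a,b), s(c,d)} : Set _)) := by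
      rw [Set.diff_self_inter]
    rw [this, Set.ncard_diff Set.inter_subset_left (Set.toFinite _), hsubpair]
  have hule : (C ∩ ({s(a,b), s(c,d)} : Set _)).ncard ≤ (G.edgeSet ∩ C).ncard := by
    rw [← hsubpair]; exact Set.ncard_le_ncard Set.inter_subset_left (Set.toFinite _)
  have hu2 : (C ∩ ({s(a,b), s(c,d)} : Set _)).ncard ≤ 2 := by
    calc (C ∩ ({s(a,b), s(c,d)} : Set _)).ncard ≤ ({s(a,b), s(c,d)} : Set _).ncard :=
          Set.ncard_le_ncard Set.inter_subset_right (Set.toFinite _)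
      _ = 2 := Set.ncard_pair hαβ
  have hw2 : (C ∩ ({s(b,c), s(a,d)} : Set _)).ncard ≤ 2 := by
    calc (C ∩ ({s(b,c), s(a,d)} : Set _)).ncard ≤ ({s(b,c), s(a,d)} : Set _).ncard :=
          Set.ncard_le_ncard Set.inter_subset_right (Set.toFinite _)
      _ = 2 := Set.ncard_pair hγδ
  have hpar : (C ∩ ({s(a,b), s(c,d)} : Set _)).ncard % 2 =
      (C ∩ ({s(b,c), s(a,d)} : Set _)).ncard % 2 := by
    rw [ncard_pair_inter C hαβ, ncard_pair_inter C hγδ]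
    have p1 : (s(a,b) ∈ C) = ((a ∈ U) ↔ ¬(b ∈ U)) := by
      rw [hC]; exact propext (crossP_mem_iff hUW hcov hab)
    have p2 : (s(c,d) ∈ C) = ((c ∈ U) ↔ ¬(d ∈ U)) := by
      rw [hC]; exact propext (crossP_mem_iff hUW hcov hcd)
    have p3 : (s(b,c) ∈ C) = ((b ∈ U) ↔ ¬(c ∈ U)) := by
      rw [hC]; exact propext (crossP_mem_iff hUW hcov hbc2)
    have p4 : (s(a,d) ∈ C) = ((a ∈ U) ↔ ¬(d ∈ U)) := by
      rw [hC]; exact propext (crossP_mem_iff hUW hcov had2)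
    simp only [p1, p2, p3, p4]
    by_cases hA : a ∈ U <;> by_cases hB : b ∈ U <;> by_cases hcU : c ∈ U <;>
      by_cases hD : d ∈ U <;> simp [hA, hB, hcU, hD]
  rw [crossCount_eq U W H, crossCount_eq U W G, ← hC]
  omega

def IsAW (R B : Set (Sym2 V)) (n : ℕ) (f : ℕ → V) : Prop :=
  (∀ k, f (k + n) = f k) ∧
  (∀ k, k % 2 = 0 → s(f k, f (k+1)) ∈ R) ∧
  (∀ k, k % 2 = 1 → s(f k, f (k+1)) ∈ B)

lemma IsAW.rot {R B : Set (Sym2 V)} {n : ℕ} {f : ℕ → V} (h : IsAW R B n f) {r : ℕ}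
    (hr : r % 2 = 0) : IsAW R B n (fun k => f (k + r)) := by
  obtain ⟨hp, hR, hB⟩ := h
  refine ⟨fun k => ?_, fun k hk => ?_, fun k hk => ?_⟩
  · show f (k + n + r) = f (k + r)
    rw [show k + n + r = (k + r) + n by omega]; exact hp (k + r)
  · show s(f (k + r), f (k + 1 + r)) ∈ R
    rw [show k + 1 + r = (k + r) + 1 by omega]
    exact hR (k + r) (by omega)
  · show s(f (k + r), f (k + 1 + r)) ∈ B
    rw [show k + 1 + r = (k + r) + 1 by omega]
    exact hB (k + r) (by omega)

lemma IsAW.colorshift {R B : Set (Sym2 V)} {n : ℕ} {f : ℕ → V} (h : IsAW R B n f) :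
    IsAW B R n (fun k => f (k + 1)) := by
  obtain ⟨hp, hR, hB⟩ := h
  refine ⟨fun k => ?_, fun k hk => ?_, fun k hk => ?_⟩
  · show f (k + n + 1) = f (k + 1)
    rw [show k + n + 1 = (k + 1) + n by omega]; exact hp (k + 1)
  · show s(f (k + 1), f (k + 1 + 1)) ∈ B
    exact hB (k + 1) (by omega)
  · show s(f (k + 1), f (k + 1 + 1)) ∈ R
    exact hR (k + 1) (by omega)

lemma aux_wrap {R B : Set (Sym2 V)} (g : ℕ → V)
    (hR : ∀ k, k % 2 = 0 → s(g k, g (k+1)) ∈ R)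
    (hB : ∀ k, k % 2 = 1 → s(g k, g (k+1)) ∈ B)
    (i m : ℕ) (hi : i % 2 = 0) (hm : 0 < m) (hme : m % 2 = 0)
    (heq : g i = g (i + m)) :
    IsAW R B m (fun t => g (i + t % m)) := by
  have hm2 : 2 ≤ m := by omega
  have hmod : ∀ k : ℕ, (k + 1) % m = (k % m + 1) % m := by
    intro k
    rw [Nat.add_mod k 1 m, Nat.mod_eq_of_lt (show 1 < m by omega)]
  refine ⟨fun k => by simp [Nat.add_mod_right], fun k hk => ?_, fun k hk => ?_⟩
  · have e1 : k % m % 2 = 0 := by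
      rw [Nat.mod_mod_of_dvd k (by omega : (2:ℕ) ∣ m)]; exact hk
    have e2 : k % m < m := Nat.mod_lt _ hm
    have e4 : k % m + 1 < m := by omega
    have e5 : (k+1) % m = k % m + 1 := by
      rw [hmod k, Nat.mod_eq_of_lt e4]
    show s(g (i + k % m), g (i + (k+1) % m)) ∈ R
    rw [e5, show i + (k % m + 1) = (i + k % m) + 1 by omega]
    exact hR (i + k % m) (by omega)
  · have e1 : k % m % 2 = 1 := by
      rw [Nat.mod_mod_of_dvd k (by omega : (2:ℕ) ∣ m)]; exact hk
    have e2 : k % m < m := Nat.mod_lt _ hm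
    show s(g (i + k % m), g (i + (k+1) % m)) ∈ B
    by_cases e3 : k % m + 1 < m
    · rw [hmod k, Nat.mod_eq_of_lt e3, show i + (k % m + 1) = (i + k % m) + 1 by omega]
      exact hB (i + k % m) (by omega)
    · have e6 : k % m = m - 1 := by omega
      have e7 : (k+1) % m = 0 := by
        rw [hmod k, e6, show m - 1 + 1 = m by omega, Nat.mod_self]
      rw [e7, Nat.add_zero, heq, show i + m = (i + k % m) + 1 by omega]
      exact hB (i + k % m) (by omega)

lemma aux_exists_shorter {R B : Set (Sym2 V)} {n : ℕ} {f : ℕ → V} (hf : IsAW R B n f)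
    {i m : ℕ} (hm : 0 < m) (hme : m % 2 = 0) (heq : f i = f (i + m)) :
    ∃ g, IsAW R B m g := by
  obtain ⟨hp, hR, hB⟩ := hf
  by_cases hi : i % 2 = 0
  · exact ⟨_, aux_wrap f hR hB i m hi hm hme heq⟩
  · have h1 : IsAW B R n (fun k => f (k + 1)) := IsAW.colorshift ⟨hp, hR, hB⟩
    have hi1 : (i - 1) % 2 = 0 := by omega
    have heq' : f ((i-1) + 1) = f ((i-1) + m + 1) := by
      rw [show (i-1) + 1 = i by omega, show (i-1) + m + 1 = i + m by omega]
      exact heq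
    have h2 : IsAW B R m (fun t => f ((i-1) + t % m + 1)) := by
      have := aux_wrap (fun k => f (k + 1)) h1.2.1 h1.2.2 (i-1) m hi1 hm hme heq'
      exact this
    exact ⟨_, h2.colorshift⟩

lemma aux_mk4 {R B : Set (Sym2 V)} {x0 x1 x2 x3 : V}
    (h0 : s(x0,x1) ∈ R) (h1 : s(x1,x2) ∈ B) (h2 : s(x2,x3) ∈ R) (h3 : s(x3,x0) ∈ B) :
    ∃ f, IsAW R B 4 f := by
  refine ⟨fun t => if t % 4 = 0 then x0 else if t % 4 = 1 then x1
    else if t % 4 = 2 then x2 else x3, fun k => by simp [Nat.add_mod_right], fun k hk => ?_, fun k hk => ?_⟩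
  · have h4 : k % 4 = 0 ∨ k % 4 = 2 := by omega
    rcases h4 with h4 | h4
    · have h5 : (k+1) % 4 = 1 := by omega
      simp only [h4, h5]; norm_num; exact h0
    · have h5 : (k+1) % 4 = 3 := by omega
      simp only [h4, h5]; norm_num; exact h2
  · have h4 : k % 4 = 1 ∨ k % 4 = 3 := by omega
    rcases h4 with h4 | h4
    · have h5 : (k+1) % 4 = 2 := by omega
      simp only [h4, h5]; norm_num; exact h1
    · have h5 : (k+1) % 4 = 0 := by omega
      simp only [h4, h5]; norm_num; exact h3

lemma aux_chordWrap {R B : Set (Sym2 V)} {n : ℕ} {f : ℕ → V} (hf : IsAW R B n f)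
    (hne : n % 2 = 0) (hn4 : 4 ≤ n) (hx : s(f (n-1), f 2) ∈ B) :
    IsAW R B (n-2) (fun t => f (2 + t % (n-2))) := by
  obtain ⟨hp, hR, hB⟩ := hf
  set m := n - 2 with hmdef
  have hm : 0 < m := by omega
  have hmod : ∀ k : ℕ, (k + 1) % m = (k % m + 1) % m := by
    intro k
    rcases Nat.lt_or_ge 1 m with h | h
    · rw [Nat.add_mod k 1 m, Nat.mod_eq_of_lt h]
    · interval_cases m <;> omega
  refine ⟨fun k => by simp [Nat.add_mod_right], fun k hk => ?_, fun k hk => ?_⟩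
  · have e1 : k % m % 2 = 0 := by
      rw [Nat.mod_mod_of_dvd k (by omega : (2:ℕ) ∣ m)]; exact hk
    have e2 : k % m < m := Nat.mod_lt _ hm
    have e4 : k % m + 1 < m ∨ k % m + 1 = m := by omega
    have e5 : k % m + 1 < m := by omega
    show s(f (2 + k % m), f (2 + (k+1) % m)) ∈ R
    rw [hmod k, Nat.mod_eq_of_lt e5, show 2 + (k % m + 1) = (2 + k % m) + 1 by omega]
    exact hR (2 + k % m) (by omega)
  · have e1 : k % m % 2 = 1 := by
      rw [Nat.mod_mod_of_dvd k (by omega : (2:ℕ) ∣ m)]; exact hk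
    have e2 : k % m < m := Nat.mod_lt _ hm
    show s(f (2 + k % m), f (2 + (k+1) % m)) ∈ B
    by_cases e3 : k % m + 1 < m
    · rw [hmod k, Nat.mod_eq_of_lt e3, show 2 + (k % m + 1) = (2 + k % m) + 1 by omega]
      exact hB (2 + k % m) (by omega)
    · have e6 : k % m = m - 1 := by omega
      have e7 : (k+1) % m = 0 := by
        rw [hmod k, e6, show m - 1 + 1 = m by omega, Nat.mod_self]
      rw [e7, Nat.add_zero, e6, show 2 + (m - 1) = n - 1 by omega]
      exact hx

lemma aux_nbhd_balance [Finite V] {G G' : SimpleGraph V} (hdeg : ∀ v, gdeg G v = gdeg G' v)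
    (v : V) : {u | s(v,u) ∈ G.edgeSet \ G'.edgeSet}.Nonempty ↔
      {u | s(v,u) ∈ G'.edgeSet \ G.edgeSet}.Nonempty := by
  have h1 : {u | s(v,u) ∈ G.edgeSet \ G'.edgeSet} = G.neighborSet v \ G'.neighborSet v := by
    ext u; simp [mem_neighborSet, Set.mem_diff, mem_edgeSet]
  have h2 : {u | s(v,u) ∈ G'.edgeSet \ G.edgeSet} = G'.neighborSet v \ G.neighborSet v := by
    ext u; simp [mem_neighborSet, Set.mem_diff, mem_edgeSet]
  have h3 : (G.neighborSet v \ G'.neighborSet v).ncard = (G'.neighborSet v \ G.neighborSet v).ncard := by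
    have e1 := Set.ncard_inter_add_ncard_diff_eq_ncard (G.neighborSet v) (G'.neighborSet v)
      (Set.toFinite _)
    have e2 := Set.ncard_inter_add_ncard_diff_eq_ncard (G'.neighborSet v) (G.neighborSet v)
      (Set.toFinite _)
    have e3 : (G.neighborSet v ∩ G'.neighborSet v).ncard =
        (G'.neighborSet v ∩ G.neighborSet v).ncard := by rw [Set.inter_comm]
    have e4 := hdeg v
    unfold gdeg at e4
    omega
  rw [h1, h2, ← Set.ncard_pos (Set.toFinite _), ← Set.ncard_pos (Set.toFinite _), h3]

lemma aux_exists_walk [Finite V] {R B : Set (Sym2 V)}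
    (hstep : ∀ v : V, {u | s(v,u) ∈ R}.Nonempty ↔ {u | s(v,u) ∈ B}.Nonempty)
    (hR0 : R.Nonempty) :
    ∃ m f, 0 < m ∧ m % 2 = 0 ∧ IsAW R B m f := by
  classical
  obtain ⟨e, he⟩ := hR0
  induction e with
  | h a b =>
    let nR : V → V := fun v => if h : {u | s(v,u) ∈ R}.Nonempty then h.choose else v
    let nB : V → V := fun v => if h : {u | s(v,u) ∈ B}.Nonempty then h.choose else v
    have hnR : ∀ v, {u | s(v,u) ∈ R}.Nonempty → s(v, nR v) ∈ R := by
      intro v h; simp only [nR, dif_pos h]; exact h.choose_spec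
    have hnB : ∀ v, {u | s(v,u) ∈ B}.Nonempty → s(v, nB v) ∈ B := by
      intro v h; simp only [nB, dif_pos h]; exact h.choose_spec
    let g : ℕ → V := fun k => Nat.rec a (fun k ih => if k % 2 = 0 then nR ih else nB ih) k
    have hgs : ∀ k, g (k+1) = if k % 2 = 0 then nR (g k) else nB (g k) := fun k => rfl
    have hinv : ∀ k, (k % 2 = 0 → {u | s(g k, u) ∈ R}.Nonempty) ∧
        (k % 2 = 1 → {u | s(g k, u) ∈ B}.Nonempty) := by
      intro k
      induction k with
      | zero =>
        refine ⟨fun _ => ⟨b, he⟩, fun h => by omega⟩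
      | succ k ih =>
        rcases Nat.even_or_odd k with hk | hk
        · have hk0 : k % 2 = 0 := Nat.even_iff.mp hk
          have hne := ih.1 hk0
          have hedge : s(g k, g (k+1)) ∈ R := by
            rw [hgs k, if_pos hk0]; exact hnR _ hne
          have hmem : g k ∈ {u | s(g (k+1), u) ∈ R} := by
            simp only [Set.mem_setOf_eq, Sym2.eq_swap]; exact hedge
          refine ⟨fun h => by omega, fun _ => (hstep _).mp ⟨g k, hmem⟩⟩
        · have hk1 : k % 2 = 1 := Nat.odd_iff.mp hk
          have hne := ih.2 hk1
          have hedge : s(g k, g (k+1)) ∈ B := by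
            rw [hgs k, if_neg (by omega)]; exact hnB _ hne
          have hmem : g k ∈ {u | s(g (k+1), u) ∈ B} := by
            simp only [Set.mem_setOf_eq, Sym2.eq_swap]; exact hedge
          refine ⟨fun _ => (hstep _).mpr ⟨g k, hmem⟩, fun h => by omega⟩
    have hgR : ∀ k, k % 2 = 0 → s(g k, g (k+1)) ∈ R := by
      intro k hk
      rw [hgs k, if_pos hk]; exact hnR _ ((hinv k).1 hk)
    have hgB : ∀ k, k % 2 = 1 → s(g k, g (k+1)) ∈ B := by
      intro k hk
      rw [hgs k, if_neg (by omega)]; exact hnB _ ((hinv k).2 hk)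
    obtain ⟨k1, k2, hkne, hkeq⟩ : ∃ k1 k2, k1 ≠ k2 ∧ g (2*k1) = g (2*k2) := by
      have := Finite.exists_ne_map_eq_of_infinite (fun k : ℕ => g (2*k))
      obtain ⟨k1, k2, h1, h2⟩ := this
      exact ⟨k1, k2, h1, h2⟩
    rcases Nat.lt_or_ge k1 k2 with hlt | hge
    · refine ⟨2*k2 - 2*k1, _, by omega, by omega,
        aux_wrap g hgR hgB (2*k1) (2*k2 - 2*k1) (by omega) (by omega) (by omega) ?_⟩
      rw [show 2*k1 + (2*k2 - 2*k1) = 2*k2 by omega]; exact hkeq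
    · have hlt : k2 < k1 := by omega
      refine ⟨2*k1 - 2*k2, _, by omega, by omega,
        aux_wrap g hgR hgB (2*k2) (2*k1 - 2*k2) (by omega) (by omega) (by omega) ?_⟩
      rw [show 2*k2 + (2*k1 - 2*k2) = 2*k1 by omega]; exact hkeq.symm

lemma aux_key [Finite V] {U W : Set V} (hUW : Disjoint U W) (hcov : U ∪ W = Set.univ)
    (G G' : SimpleGraph V) (hdeg : ∀ v, gdeg G v = gdeg G' v) (hGne : G ≠ G') :
    (∃ H : SimpleGraph V, (∀ v, gdeg H v = gdeg G v) ∧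
      (H.edgeSet \ G'.edgeSet).ncard < (G.edgeSet \ G'.edgeSet).ncard ∧
      crossCount U W H % 2 = crossCount U W G % 2 ∧
      crossCount U W H ≤ crossCount U W G + 2 ∧ crossCount U W G ≤ crossCount U W H + 2) ∨
    (∃ H : SimpleGraph V, (∀ v, gdeg H v = gdeg G' v) ∧
      (G.edgeSet \ H.edgeSet).ncard < (G.edgeSet \ G'.edgeSet).ncard ∧
      crossCount U W H % 2 = crossCount U W G' % 2 ∧
      crossCount U W H ≤ crossCount U W G' + 2 ∧ crossCount U W G' ≤ crossCount U W H + 2) := by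
  classical
  set R := G.edgeSet \ G'.edgeSet with hRdef
  set B := G'.edgeSet \ G.edgeSet with hBdef
  have hR0 : R.Nonempty := by
    rcases Set.eq_empty_or_nonempty R with h | h
    · exfalso
      apply hGne
      apply aux_eq_of_subset _ hdeg
      intro e he
      by_contra hc
      exact Set.eq_empty_iff_forall_notMem.mp h e ⟨he, hc⟩
    · exact h
  have hstep : ∀ v : V, {u | s(v,u) ∈ R}.Nonempty ↔ {u | s(v,u) ∈ B}.Nonempty :=
    aux_nbhd_balance hdeg
  obtain ⟨m0, f0, hm0, hm0e, hf0⟩ := aux_exists_walk hstep hR0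
  set S := {m | 0 < m ∧ m % 2 = 0 ∧ ∃ f : ℕ → V, IsAW R B m f} with hSdef
  have hS : S.Nonempty := ⟨m0, hm0, hm0e, f0, hf0⟩
  set n := sInf S with hndef
  obtain ⟨hn0, hne2, f, hf⟩ : n ∈ S := Nat.sInf_mem hS
  have hmin : ∀ m ∈ S, n ≤ m := fun m hm => Nat.sInf_le hm
  have hRB : ∀ e, e ∈ R → e ∈ B → False := fun e h1 h2 => h2.2 h1.1
  have hgap : ∀ (f' : ℕ → V), IsAW R B n f' → ∀ i m, 0 < m → m % 2 = 0 → m < n →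
      f' i ≠ f' (i + m) := by
    intro f' hf' i m h1 h2 h3 heq
    obtain ⟨g, hg⟩ := aux_exists_shorter hf' h1 h2 heq
    have := hmin m ⟨h1, h2, g, hg⟩
    omega
  have hn2 : n ≠ 2 := by
    intro h
    have h1 := hf.2.1 0 (by omega)
    have h2 := hf.2.2 1 (by omega)
    have hper := hf.1 0
    rw [show 0 + n = 1 + 1 by omega] at hper
    rw [hper] at h2
    rw [Sym2.eq_swap] at h2
    exact hRB _ h1 h2
  have hn4 : 4 ≤ n := by omega
  rcases Nat.lt_or_ge n 6 with h6 | h6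
  · -- n = 4 case
    have hn4' : n = 4 := by omega
    have eR0 : s(f 0, f 1) ∈ R := hf.2.1 0 (by omega)
    have eR2 : s(f 2, f 3) ∈ R := hf.2.1 2 (by omega)
    have eB1 : s(f 1, f 2) ∈ B := hf.2.2 1 (by omega)
    have eB3 : s(f 3, f 0) ∈ B := by
      have h := hf.2.2 3 (by omega)
      have hper := hf.1 0
      rw [show 0 + n = 3 + 1 by omega] at hper
      rwa [hper] at h
    have hGab : G.Adj (f 0) (f 1) := eR0.1
    have hGcd : G.Adj (f 2) (f 3) := eR2.1
    have hGbc : ¬ G.Adj (f 1) (f 2) := eB1.2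
    have hGad : ¬ G.Adj (f 0) (f 3) := fun h => eB3.2 (by rw [Sym2.eq_swap]; exact h)
    have hac : f 0 ≠ f 2 := by
      have := hgap f hf 0 2 (by omega) (by omega) (by omega)
      simpa using this
    have hbd : f 1 ≠ f 3 := by
      have := hgap f hf 1 2 (by omega) (by omega) (by omega)
      simpa using this
    have hbc : f 1 ≠ f 2 := (eB1.1 : G'.Adj (f 1) (f 2)).ne
    have had : f 0 ≠ f 3 := ((eB3.1 : G'.Adj (f 3) (f 0)).ne).symm
    set H := fromEdgeSet ((G.edgeSet \ {s(f 0, f 1), s(f 2, f 3)}) ∪ {s(f 1, f 2), s(f 0, f 3)})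
      with hHdef
    have hE : H.edgeSet = (G.edgeSet \ {s(f 0, f 1), s(f 2, f 3)}) ∪ {s(f 1, f 2), s(f 0, f 3)} :=
      swap_edgeSet G hbc had
    have hEdiff : H.edgeSet \ G'.edgeSet =
        (G.edgeSet \ G'.edgeSet) \ {s(f 0, f 1), s(f 2, f 3)} := by
      rw [hE]; ext e
      simp only [Set.mem_union, Set.mem_diff, Set.mem_insert_iff, Set.mem_singleton_iff]
      constructor
      · rintro ⟨(⟨h1, h2⟩ | h3), h4⟩
        · exact ⟨⟨h1, h4⟩, h2⟩
        · exfalso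
          rcases h3 with rfl | rfl
          · exact h4 eB1.1
          · exact h4 (by rw [Sym2.eq_swap]; exact eB3.1)
      · rintro ⟨⟨h1, h2⟩, h3⟩
        exact ⟨Or.inl ⟨h1, h3⟩, h2⟩
    left
    refine ⟨H, swap_deg hac had hbd hbc hGab hGcd hGbc hGad hE, ?_, ?_⟩
    · rw [hEdiff]
      apply Set.ncard_lt_ncard _ (Set.toFinite _)
      refine ⟨Set.diff_subset, fun hsub => ?_⟩
      exact (hsub eR0).2 (Or.inl rfl)
    · exact swap_cross hUW hcov hac had hbd hbc hGab hGcd hGbc hGad hE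
  · -- n ≥ 6
    by_cases hgood : ∃ r, r % 2 = 0 ∧ f (r+2) ≠ f (r + (n-1))
    · obtain ⟨r, hr, hne23⟩ := hgood
      set f' := fun k => f (k + r) with hf'def
      have hf' : IsAW R B n f' := hf.rot hr
      have eR0 : s(f' 0, f' 1) ∈ R := hf'.2.1 0 (by omega)
      have eB1 : s(f' 1, f' 2) ∈ B := hf'.2.2 1 (by omega)
      have eBn : s(f' (n-1), f' 0) ∈ B := by
        have h := hf'.2.2 (n-1) (by omega)
        have hper := hf'.1 0
        rw [show 0 + n = (n-1) + 1 by omega] at hper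
        rwa [hper] at h
      have hne23' : f' 2 ≠ f' (n-1) := by
        simp only [hf'def]
        rw [show 2 + r = r + 2 by omega, show (n-1) + r = r + (n-1) by omega]
        exact hne23
      by_cases hxB : s(f' 2, f' (n-1)) ∈ B
      · exfalso
        have hx' : s(f' (n-1), f' 2) ∈ B := by rwa [Sym2.eq_swap] at hxB
        have hcw := aux_chordWrap hf' hne2 hn4 hx'
        have := hmin (n-2) ⟨by omega, by omega, _, hcw⟩
        omega
      by_cases hxG : s(f' 2, f' (n-1)) ∈ G.edgeSet
      · -- swap on G
        have hGab : G.Adj (f' 0) (f' 1) := eR0.1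
        have hGcd : G.Adj (f' 2) (f' (n-1)) := hxG
        have hGbc : ¬ G.Adj (f' 1) (f' 2) := eB1.2
        have hGad : ¬ G.Adj (f' 0) (f' (n-1)) := fun h => eBn.2 (by rw [Sym2.eq_swap]; exact h)
        have hac : f' 0 ≠ f' 2 := by
          have := hgap f' hf' 0 2 (by omega) (by omega) (by omega)
          simpa using this
        have hbd : f' 1 ≠ f' (n-1) := by
          have := hgap f' hf' 1 (n-2) (by omega) (by omega) (by omega)
          rwa [show 1 + (n-2) = n-1 by omega] at this
        have hbc : f' 1 ≠ f' 2 := (eB1.1 : G'.Adj (f' 1) (f' 2)).ne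
        have had : f' 0 ≠ f' (n-1) := ((eBn.1 : G'.Adj (f' (n-1)) (f' 0)).ne).symm
        set H := fromEdgeSet ((G.edgeSet \ {s(f' 0, f' 1), s(f' 2, f' (n-1))}) ∪
          {s(f' 1, f' 2), s(f' 0, f' (n-1))}) with hHdef
        have hE : H.edgeSet = (G.edgeSet \ {s(f' 0, f' 1), s(f' 2, f' (n-1))}) ∪
            {s(f' 1, f' 2), s(f' 0, f' (n-1))} := swap_edgeSet G hbc had
        have hEdiff : H.edgeSet \ G'.edgeSet =
            (G.edgeSet \ G'.edgeSet) \ {s(f' 0, f' 1), s(f' 2, f' (n-1))} := by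
          rw [hE]; ext e
          simp only [Set.mem_union, Set.mem_diff, Set.mem_insert_iff, Set.mem_singleton_iff]
          constructor
          · rintro ⟨(⟨h1, h2⟩ | h3), h4⟩
            · exact ⟨⟨h1, h4⟩, h2⟩
            · exfalso
              rcases h3 with rfl | rfl
              · exact h4 eB1.1
              · exact h4 (by rw [Sym2.eq_swap]; exact eBn.1)
          · rintro ⟨⟨h1, h2⟩, h3⟩
            exact ⟨Or.inl ⟨h1, h3⟩, h2⟩
        left
        refine ⟨H, swap_deg hac had hbd hbc hGab hGcd hGbc hGad hE, ?_, ?_⟩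
        · rw [hEdiff]
          apply Set.ncard_lt_ncard _ (Set.toFinite _)
          refine ⟨Set.diff_subset, fun hsub => ?_⟩
          exact (hsub eR0).2 (Or.inl rfl)
        · exact swap_cross hUW hcov hac had hbd hbc hGab hGcd hGbc hGad hE
      · -- swap on G'
        have hxG' : s(f' 2, f' (n-1)) ∉ G'.edgeSet := fun h => hxB ⟨h, hxG⟩
        have hG'ab : G'.Adj (f' 2) (f' 1) := ((eB1.1 : G'.Adj (f' 1) (f' 2))).symm
        have hG'cd : G'.Adj (f' 0) (f' (n-1)) := ((eBn.1 : G'.Adj (f' (n-1)) (f' 0))).symm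
        have hG'bc : ¬ G'.Adj (f' 1) (f' 0) := fun h => eR0.2 (by rw [Sym2.eq_swap]; exact h)
        have hG'ad : ¬ G'.Adj (f' 2) (f' (n-1)) := hxG'
        have hac : f' 0 ≠ f' 2 := by
          have := hgap f' hf' 0 2 (by omega) (by omega) (by omega)
          simpa using this
        have hbd : f' 1 ≠ f' (n-1) := by
          have := hgap f' hf' 1 (n-2) (by omega) (by omega) (by omega)
          rwa [show 1 + (n-2) = n-1 by omega] at this
        have hba : f' 1 ≠ f' 0 := (eR0.1 : G.Adj (f' 0) (f' 1)).ne.symm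
        set H := fromEdgeSet ((G'.edgeSet \ {s(f' 2, f' 1), s(f' 0, f' (n-1))}) ∪
          {s(f' 1, f' 0), s(f' 2, f' (n-1))}) with hHdef
        have hE : H.edgeSet = (G'.edgeSet \ {s(f' 2, f' 1), s(f' 0, f' (n-1))}) ∪
            {s(f' 1, f' 0), s(f' 2, f' (n-1))} := swap_edgeSet G' hba hne23'
        have hα : s(f' 2, f' 1) ∉ G.edgeSet := fun h => eB1.2 (by rw [Sym2.eq_swap] at h; exact h)
        have hβ : s(f' 0, f' (n-1)) ∉ G.edgeSet :=
          fun h => eBn.2 (by rw [Sym2.eq_swap] at h; exact h)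
        have hγR : s(f' 1, f' 0) ∈ R := by rw [Sym2.eq_swap]; exact eR0
        have hEdiff : G.edgeSet \ H.edgeSet = (G.edgeSet \ G'.edgeSet) \ {s(f' 1, f' 0)} := by
          rw [hE]
          ext e
          constructor
          · rintro ⟨h1, h2⟩
            have hnG' : e ∉ G'.edgeSet := by
              intro hG'
              apply h2
              left
              refine ⟨hG', fun hmem => ?_⟩
              simp only [Set.mem_insert_iff, Set.mem_singleton_iff] at hmem
              rcases hmem with rfl | rfl
              · exact hα h1
              · exact hβ h1
            refine ⟨⟨h1, hnG'⟩, fun h3 => ?_⟩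
            rw [Set.mem_singleton_iff] at h3
            exact h2 (Or.inr (Or.inl h3))
          · rintro ⟨⟨h1, h2⟩, h3⟩
            rw [Set.mem_singleton_iff] at h3
            refine ⟨h1, fun hmem => ?_⟩
            rcases hmem with ⟨hG', _⟩ | hdd
            · exact h2 hG'
            · simp only [Set.mem_insert_iff, Set.mem_singleton_iff] at hdd
              rcases hdd with rfl | rfl
              · exact h3 rfl
              · exact hxG h1
        right
        have hdegH : ∀ v, gdeg H v = gdeg G' v :=
          swap_deg (Ne.symm hac) hne23' hbd hba hG'ab hG'cd hG'bc hG'ad hE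
        refine ⟨H, hdegH, ?_, ?_⟩
        · rw [hEdiff]
          apply Set.ncard_lt_ncard _ (Set.toFinite _)
          refine ⟨Set.diff_subset, fun hsub => ?_⟩
          exact (hsub hγR).2 rfl
        · exact swap_cross hUW hcov (Ne.symm hac) hne23' hbd hba hG'ab hG'cd hG'bc hG'ad hE
    · -- all rotations degenerate: contradiction
      exfalso
      push_neg at hgood
      have h20 : f 2 = f (n-1) := by
        have := hgood 0 (by omega)
        simpa using this
      have h41 : f 4 = f 1 := by
        have h := hgood 2 (by omega)
        rw [show 2 + (n-1) = 1 + n by omega, hf.1 1] at h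
        exact h
      have h63 : f 6 = f 3 := by
        have h := hgood 4 (by omega)
        rw [show 4 + (n-1) = 3 + n by omega, hf.1 3] at h
        exact h
      have hx01 : s(f 1, f 5) ∈ R := by
        have h := hf.2.1 4 (by omega)
        rwa [h41] at h
      have hx12 : s(f 5, f 3) ∈ B := by
        have h := hf.2.2 5 (by omega)
        rwa [show (5:ℕ)+1 = 6 by omega, h63] at h
      have hx23 : s(f 3, f (n-1)) ∈ R := by
        have h := hf.2.1 2 (by omega)
        rw [h20] at h
        rwa [Sym2.eq_swap] at h
      have hx30 : s(f (n-1), f 1) ∈ B := by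
        have h := hf.2.2 (n+1) (by omega)
        rw [show n + 1 = 1 + n by omega, hf.1 1, show 1 + n + 1 = 2 + n by omega,
          hf.1 2, h20] at h
        rwa [Sym2.eq_swap] at h
      obtain ⟨g4, hg4⟩ := aux_mk4 hx01 hx12 hx23 hx30
      have := hmin 4 ⟨by omega, by omega, g4, hg4⟩
      omega

lemma aux_parity [Finite V] {U W : Set V} (hUW : Disjoint U W) (hcov : U ∪ W = Set.univ) :
    ∀ n (G G' : SimpleGraph V), (∀ v, gdeg G v = gdeg G' v) →
      (G.edgeSet \ G'.edgeSet).ncard = n →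
      crossCount U W G % 2 = crossCount U W G' % 2 := by
  intro n
  induction n using Nat.strong_induction_on with
  | _ n ih =>
    intro G G' hdeg hr
    by_cases hne : G = G'
    · rw [hne]
    · rcases aux_key hUW hcov G G' hdeg hne with ⟨H, h1, h2, h3, _, _⟩ | ⟨H, h1, h2, h3, _, _⟩
      · have := ih _ (by rw [← hr]; exact h2) H G' (fun v => (h1 v).trans (hdeg v)) rfl
        omega
      · have := ih _ (by rw [← hr]; exact h2) G H (fun v => (hdeg v).trans (h1 v).symm) rfl
        omega

lemma aux_main [Finite V] {U W : Set V} (hUW : Disjoint U W) (hcov : U ∪ W = Set.univ)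
    (d : V → ℕ) :
    ∀ n (G G' : SimpleGraph V), IsRealization G d → IsRealization G' d →
      (G.edgeSet \ G'.edgeSet).ncard = n → ∀ ℓ, crossCount U W G ≤ ℓ →
      ℓ ≤ crossCount U W G' → ℓ % 2 = crossCount U W G % 2 →
      ∃ H, IsRealization H d ∧ crossCount U W H = ℓ := by
  intro n
  induction n using Nat.strong_induction_on with
  | _ n ih =>
    intro G G' hG hG' hr ℓ hl1 hl2 hl3
    by_cases hl0 : ℓ = crossCount U W G
    · exact ⟨G, hG, hl0.symm⟩
    have hlt : crossCount U W G < ℓ := lt_of_le_of_ne hl1 (Ne.symm hl0)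
    have hdeg : ∀ v, gdeg G v = gdeg G' v := fun v => (hG v).trans (hG' v).symm
    have hne : G ≠ G' := by rintro rfl; omega
    rcases aux_key hUW hcov G G' hdeg hne with ⟨H, h1, h2, h3, h4, h5⟩ | ⟨H, h1, h2, h3, h4, h5⟩
    · have hHreal : IsRealization H d := fun v => (h1 v).trans (hG v)
      have hHle : crossCount U W H ≤ ℓ := by omega
      exact ih _ (by rw [← hr]; exact h2) H G' hHreal hG' rfl ℓ hHle hl2 (by omega)
    · have hHreal : IsRealization H d := fun v => (h1 v).trans (hG' v)
      have hpar : crossCount U W G % 2 = crossCount U W G' % 2 :=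
        aux_parity hUW hcov _ G G' hdeg rfl
      by_cases hc : ℓ ≤ crossCount U W H
      · exact ih _ (by rw [← hr]; exact h2) G H hG hHreal rfl ℓ hl1 hc hl3
      · have heq : ℓ = crossCount U W G' := by omega
        exact ⟨G', hG', heq.symm⟩

end CCIVAux

/-- Every value of the right parity between the crossing-edge counts of two realizations is
attained by some realization. -/
theorem crossCount_intermediate_values {V : Type*} [Fintype V] (U W : Set V)
    (hUW : Disjoint U W) (hcov : U ∪ W = Set.univ) (d : V → ℕ)
    (G G' : SimpleGraph V) (hG : IsRealization G d) (hG' : IsRealization G' d)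
    (hlt : crossCount U W G < crossCount U W G')
    (ℓ : ℕ) (h₁ : crossCount U W G ≤ ℓ) (h₂ : ℓ ≤ crossCount U W G')
    (hpar : ℓ % 2 = crossCount U W G % 2) :
    ∃ G'' : SimpleGraph V, IsRealization G'' d ∧ crossCount U W G'' = ℓ :=
  aux_main hUW hcov d _ G G' hG hG' rfl ℓ h₁ h₂ hpar
end

section
/- Fix a bipartition of the finite vertex set V into two disjoint parts U and W, and let d : V → ℕ be a graphical degree sequence (one having at least one realization). Let m and M be, respectively, the minimum and the maximum of ε(G) over all realizations G of d. Then for every natural number k, there exists a realization G of d with ε(G) = k if and only if m ≤ k ≤ M and k ≡ m (mod 2). -/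
open SimpleGraph

variable {V : Type*}

/-!
Call a *swap* the replacement of two edges `ab`, `cd` by two non-edges `bc`, `ad`. A swap
preserves all degrees, changes `ε` by at most `2`, and preserves the parity of `ε`, because each
of `a, b, c, d` lies on exactly one removed and one added edge.

Any two graphs with the same degrees are joined by a sequence of swaps. One settles the
neighbourhood of one vertex `w` at a time, keeping track of a set `S` of unsettled vertices
outside of which the two graphs agree. If `y` is a neighbour of `w` only in `G` and `x` only in
`G'`, compare the numbers of neighbours of `x` and `y` inside `S` (they are the same in `G` and
`G'`). If `x` has at least as many, it has a neighbour `z ∈ S` in `G` that is not a neighbour of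
`y`, and the swap `zx, wy ↦ xw, yz` in `G` replaces `y` by `x` in the neighbourhood of `w`. In the
other case the symmetric swap is made in `G'`.

Following such a sequence from a realization with `ε = m` to one with `ε = M`, one meets
every `k` with `m ≤ k ≤ M` and `k ≡ m (mod 2)`.
-/

open Relation

structure IsSwapAt (G H : SimpleGraph V) (a b c d : V) : Prop where
  ne_ab : a ≠ b
  ne_ac : a ≠ c
  ne_ad : a ≠ d
  ne_bc : b ≠ c
  ne_bd : b ≠ d
  ne_cd : c ≠ d
  adj_ab : G.Adj a b
  adj_cd : G.Adj c d
  not_adj_bc : ¬ G.Adj b c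
  not_adj_ad : ¬ G.Adj a d
  edgeSet_eq : H.edgeSet = (G.edgeSet \ {s(a, b), s(c, d)}) ∪ {s(b, c), s(a, d)}

namespace IsSwapAt

variable {G H : SimpleGraph V} {a b c d : V}

theorem exists_of_adj (hab : a ≠ b) (hac : a ≠ c) (had : a ≠ d) (hbc : b ≠ c) (hbd : b ≠ d)
    (hcd : c ≠ d) (Gab : G.Adj a b) (Gcd : G.Adj c d) (nbc : ¬ G.Adj b c) (nad : ¬ G.Adj a d) :
    ∃ H, IsSwapAt G H a b c d := by
  refine ⟨fromEdgeSet ((G.edgeSet \ {s(a, b), s(c, d)}) ∪ {s(b, c), s(a, d)}),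
    hab, hac, had, hbc, hbd, hcd, Gab, Gcd, nbc, nad, ?_⟩
  rw [edgeSet_fromEdgeSet, sdiff_eq_left, Set.disjoint_left]
  rintro e (⟨he, -⟩ | rfl | rfl)
  · exact G.not_isDiag_of_mem_edgeSet he
  · simpa using hbc
  · simpa using had

theorem isSwapWithin {A : Set V} (h : IsSwapAt G H a b c d) (ha : a ∈ A) (hb : b ∈ A)
    (hc : c ∈ A) (hd : d ∈ A) : IsSwapWithin A G H :=
  ⟨a, b, c, d, ha, hb, hc, hd, h.ne_ab, h.ne_ac, h.ne_ad, h.ne_bc, h.ne_bd, h.ne_cd,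
    h.adj_ab, h.adj_cd, h.not_adj_bc, h.not_adj_ad, h.edgeSet_eq⟩

theorem symm (h : IsSwapAt G H a b c d) : IsSwapAt H G d a b c := by
  have := h.ne_ab; have := h.ne_ac; have := h.ne_ad; have := h.ne_bc; have := h.ne_bd
  have := h.ne_cd
  have hE := h.edgeSet_eq
  refine ⟨Ne.symm ‹a ≠ d›, Ne.symm ‹b ≠ d›, Ne.symm ‹c ≠ d›, ‹a ≠ b›, ‹a ≠ c›, ‹b ≠ c›,
    ?_, ?_, ?_, ?_, ?_⟩
  any_goals rw [← mem_edgeSet, hE]; simp only [Set.mem_union, Set.mem_sdiff,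
    Set.mem_insert_iff, Set.mem_singleton_iff, Sym2.eq_iff, mem_edgeSet]; grind
  have hGH : Disjoint (G.edgeSet \ {s(a, b), s(c, d)}) {s(b, c), s(a, d)} := by
    refine Set.disjoint_left.2 fun e he he' => ?_
    rcases he' with rfl | rfl
    exacts [h.not_adj_bc he.1, h.not_adj_ad he.1]
  have hsub : {s(a, b), s(c, d)} ⊆ G.edgeSet := by
    simp [Set.insert_subset_iff, h.adj_ab, h.adj_cd]
  rw [hE, Sym2.eq_swap (a := d) (b := a), Set.pair_comm (s(a, d)), Set.union_sdiff_cancel_right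
    (Set.disjoint_iff.1 hGH), Sym2.eq_swap (a := d), Set.sdiff_union_of_subset hsub]

theorem neighborSet_eq_insert (h : IsSwapAt G H a b c d) :
    H.neighborSet c = insert b (G.neighborSet c \ {d}) := by
  have := h.ne_ab; have := h.ne_ac; have := h.ne_ad; have := h.ne_bc; have := h.ne_bd
  have := h.ne_cd
  ext v
  rw [mem_neighborSet, ← mem_edgeSet, h.edgeSet_eq]
  simp only [Set.mem_union, Set.mem_sdiff, Set.mem_insert_iff, Set.mem_singleton_iff,
    Sym2.eq_iff, mem_edgeSet, mem_neighborSet]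
  aesop

theorem neighborSet_eq_of_ne (h : IsSwapAt G H a b c d) {v : V} (ha : v ≠ a) (hb : v ≠ b)
    (hc : v ≠ c) (hd : v ≠ d) : H.neighborSet v = G.neighborSet v := by
  ext u
  rw [mem_neighborSet, ← mem_edgeSet, h.edgeSet_eq]
  simp only [Set.mem_union, Set.mem_sdiff, Set.mem_insert_iff, Set.mem_singleton_iff,
    Sym2.eq_iff, mem_edgeSet, mem_neighborSet]
  aesop

end IsSwapAt

namespace IsSwapWithin

variable {A : Set V} {G H : SimpleGraph V}

theorem exists_isSwapAt (h : IsSwapWithin A G H) :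
    ∃ a b c d, a ∈ A ∧ b ∈ A ∧ c ∈ A ∧ d ∈ A ∧ IsSwapAt G H a b c d := by
  obtain ⟨a, b, c, d, ha, hb, hc, hd, hab, hac, had, hbc, hbd, hcd, Gab, Gcd, nbc, nad, hE⟩ := h
  exact ⟨a, b, c, d, ha, hb, hc, hd, hab, hac, had, hbc, hbd, hcd, Gab, Gcd, nbc, nad, hE⟩

theorem isSwap (h : IsSwapWithin A G H) : IsSwap G H := by
  obtain ⟨a, b, c, d, -, -, -, -, h⟩ := h.exists_isSwapAt
  exact h.isSwapWithin trivial trivial trivial trivial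

theorem neighborSet_eq_of_notMem (h : IsSwapWithin A G H) {u : V} (hu : u ∉ A) :
    H.neighborSet u = G.neighborSet u := by
  obtain ⟨a, b, c, d, ha, hb, hc, hd, h⟩ := h.exists_isSwapAt
  exact h.neighborSet_eq_of_ne (ha.ne_of_notMem hu).symm (hb.ne_of_notMem hu).symm
    (hc.ne_of_notMem hu).symm (hd.ne_of_notMem hu).symm

end IsSwapWithin

namespace IsSwap

variable {G H : SimpleGraph V}

theorem exists_isSwapAt (h : IsSwap G H) : ∃ a b c d, IsSwapAt G H a b c d := by
  obtain ⟨a, b, c, d, -, -, -, -, h⟩ := IsSwapWithin.exists_isSwapAt h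
  exact ⟨a, b, c, d, h⟩

theorem symm (h : IsSwap G H) : IsSwap H G := by
  obtain ⟨a, b, c, d, h⟩ := h.exists_isSwapAt
  exact h.symm.isSwapWithin trivial trivial trivial trivial

instance : Std.Symm (@IsSwap V) := ⟨fun _ _ => symm⟩

end IsSwap

theorem crossing_mk_iff {U W : Set V} (hUW : Disjoint U W) (hcov : U ∪ W = Set.univ) (x y : V) :
    (∃ u ∈ U, ∃ w ∈ W, s(x, y) = s(u, w)) ↔ (x ∈ U ↔ y ∉ U) := by
  obtain rfl : Uᶜ = W := IsCompl.compl_eq ⟨hUW, codisjoint_iff.2 hcov⟩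
  simp only [Set.mem_compl_iff, Sym2.eq_iff]
  grind

section Counting

open scoped Classical

variable [Fintype V]

theorem ncard_sep_edgeSet_eq_sum (G : SimpleGraph V) (P : Sym2 V → Prop) [DecidablePred P] :
    {e ∈ G.edgeSet | P e}.ncard = ∑ e ∈ G.edgeFinset, if P e then 1 else 0 := by
  rw [← Finset.card_filter, ← Set.ncard_coe_finset, Finset.coe_filter]
  simp

theorem gdeg_eq_sum (G : SimpleGraph V) (v : V) :
    gdeg G v = ∑ e ∈ G.edgeFinset, if v ∈ e then 1 else 0 := by
  rw [← ncard_sep_edgeSet_eq_sum, gdeg]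
  exact (Set.ncard_congr' (G.incidenceSetEquivNeighborSet v)).symm

theorem crossCount_eq_sum (U W : Set V) (G : SimpleGraph V) :
    crossCount U W G =
      ∑ e ∈ G.edgeFinset, if ∃ u ∈ U, ∃ w ∈ W, e = s(u, w) then 1 else 0 :=
  ncard_sep_edgeSet_eq_sum G _

namespace IsSwapAt

variable {G H : SimpleGraph V} {a b c d : V}

theorem sum_edgeFinset_add (h : IsSwapAt G H a b c d) (φ : Sym2 V → ℕ) :
    ∑ e ∈ H.edgeFinset, φ e + (φ s(a, b) + φ s(c, d)) =
      ∑ e ∈ G.edgeFinset, φ e + (φ s(b, c) + φ s(a, d)) := by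
  have := h.ne_ab; have := h.ne_ac; have := h.ne_ad; have := h.ne_bc; have := h.ne_bd
  have := h.ne_cd
  have hH : Disjoint H.edgeFinset {s(a, b), s(c, d)} := by
    simp [h.symm.not_adj_bc, mt H.adj_symm h.symm.not_adj_ad]
  have hG : Disjoint G.edgeFinset {s(b, c), s(a, d)} := by
    simp [h.not_adj_bc, h.not_adj_ad]
  have hunion : H.edgeFinset ∪ {s(a, b), s(c, d)} = G.edgeFinset ∪ {s(b, c), s(a, d)} := by
    have hsub : {s(a, b), s(c, d)} ⊆ G.edgeSet := by
      simp [Set.insert_subset_iff, h.adj_ab, h.adj_cd]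
    rw [← Finset.coe_inj]
    simp only [Finset.coe_union, coe_edgeFinset, h.edgeSet_eq, Finset.coe_insert,
      Finset.coe_singleton]
    rw [Set.union_right_comm, Set.sdiff_union_of_subset hsub]
  have hne1 : s(a, b) ≠ s(c, d) := by simp [*]
  have hne2 : s(b, c) ≠ s(a, d) := by simp [*]
  rw [← Finset.sum_pair hne1, ← Finset.sum_pair hne2, ← Finset.sum_union hH,
    ← Finset.sum_union hG, hunion]

theorem gdeg_eq (h : IsSwapAt G H a b c d) (v : V) : gdeg H v = gdeg G v := by
  have := h.ne_ab; have := h.ne_ac; have := h.ne_ad; have := h.ne_bc; have := h.ne_bd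
  have := h.ne_cd
  have key := h.sum_edgeFinset_add fun e => if v ∈ e then 1 else 0
  rw [gdeg_eq_sum, gdeg_eq_sum]
  by_cases v = a <;> by_cases v = b <;> by_cases v = c <;> by_cases v = d <;>
    simp_all

theorem crossCount_le (h : IsSwapAt G H a b c d) (U W : Set V) :
    crossCount U W H ≤ crossCount U W G + 2 := by
  have key := h.sum_edgeFinset_add fun e => if ∃ u ∈ U, ∃ w ∈ W, e = s(u, w) then 1 else 0
  rw [← crossCount_eq_sum, ← crossCount_eq_sum] at key
  split_ifs at key <;> omega

theorem crossCount_mod_two (h : IsSwapAt G H a b c d) {U W : Set V} (hUW : Disjoint U W)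
    (hcov : U ∪ W = Set.univ) : crossCount U W H % 2 = crossCount U W G % 2 := by
  have key := h.sum_edgeFinset_add fun e => if ∃ u ∈ U, ∃ w ∈ W, e = s(u, w) then 1 else 0
  rw [← crossCount_eq_sum, ← crossCount_eq_sum] at key
  simp only [crossing_mk_iff hUW hcov] at key
  by_cases a ∈ U <;> by_cases b ∈ U <;> by_cases c ∈ U <;> by_cases d ∈ U <;>
    simp_all <;> omega

end IsSwapAt

namespace IsSwap

variable {G H : SimpleGraph V}

theorem gdeg_eq (h : IsSwap G H) (v : V) : gdeg H v = gdeg G v := by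
  obtain ⟨a, b, c, d, h⟩ := h.exists_isSwapAt
  exact h.gdeg_eq v

theorem crossCount_le (h : IsSwap G H) (U W : Set V) :
    crossCount U W H ≤ crossCount U W G + 2 := by
  obtain ⟨a, b, c, d, h⟩ := h.exists_isSwapAt
  exact h.crossCount_le U W

theorem crossCount_mod_two (h : IsSwap G H) {U W : Set V} (hUW : Disjoint U W)
    (hcov : U ∪ W = Set.univ) : crossCount U W H % 2 = crossCount U W G % 2 := by
  obtain ⟨a, b, c, d, h⟩ := h.exists_isSwapAt
  exact h.crossCount_mod_two hUW hcov

end IsSwap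

end Counting

section SwapSequences

variable [Fintype V] {G H : SimpleGraph V}

theorem gdeg_eq_of_reflTransGen (h : ReflTransGen IsSwap G H) (v : V) : gdeg H v = gdeg G v := by
  induction h with
  | refl => rfl
  | tail _ hstep ih => rw [hstep.gdeg_eq, ih]

theorem crossCount_mod_two_of_reflTransGen {U W : Set V} (hUW : Disjoint U W)
    (hcov : U ∪ W = Set.univ) (h : ReflTransGen IsSwap G H) :
    crossCount U W H % 2 = crossCount U W G % 2 := by
  induction h with
  | refl => rfl
  | tail _ hstep ih => rw [hstep.crossCount_mod_two hUW hcov, ih]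

theorem exists_crossCount_eq_of_reflTransGen {U W : Set V} (hUW : Disjoint U W)
    (hcov : U ∪ W = Set.univ) (h : ReflTransGen IsSwap G H) {k : ℕ}
    (hGk : crossCount U W G ≤ k) (hkH : k ≤ crossCount U W H)
    (hpar : k % 2 = crossCount U W G % 2) :
    ∃ X, ReflTransGen IsSwap G X ∧ crossCount U W X = k := by
  induction h with
  | refl => exact ⟨G, .refl, le_antisymm hGk hkH⟩
  | @tail H₁ H₂ hpath hstep ih =>
    by_cases hk : k ≤ crossCount U W H₁
    · exact ih hk
    have := hstep.crossCount_le U W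
    have := hstep.crossCount_mod_two hUW hcov
    have := crossCount_mod_two_of_reflTransGen hUW hcov hpath
    exact ⟨H₂, hpath.tail hstep, by omega⟩

end SwapSequences

section Connectivity

variable {G G' : SimpleGraph V} {S : Set V}

theorem mem_of_adj_of_not_adj (hS : ∀ u ∉ S, G.neighborSet u = G'.neighborSet u) {u v : V}
    (h : G.Adj u v) (h' : ¬ G'.Adj u v) : u ∈ S := by
  by_contra hu
  exact h' (Set.ext_iff.1 (hS u hu) v |>.1 h)

theorem ncard_neighborSet_inter_eq [Finite V] (hS : ∀ u ∉ S, G.neighborSet u = G'.neighborSet u)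
    {v : V} (hdeg : gdeg G v = gdeg G' v) :
    (G.neighborSet v ∩ S).ncard = (G'.neighborSet v ∩ S).ncard := by
  have hout : G.neighborSet v \ S = G'.neighborSet v \ S := by
    ext u
    simp only [Set.mem_sdiff, and_congr_left_iff]
    intro hu
    rw [mem_neighborSet, mem_neighborSet, G.adj_comm, G'.adj_comm, ← mem_neighborSet,
      ← mem_neighborSet, hS u hu]
  have h := Set.ncard_inter_add_ncard_sdiff_eq_ncard (G.neighborSet v) S
  have h' := Set.ncard_inter_add_ncard_sdiff_eq_ncard (G'.neighborSet v) S
  rw [gdeg, gdeg] at hdeg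
  rw [hout] at h
  omega

theorem exists_adj_not_adj_of_ncard_le [Finite V] {w x y : V} (hx : x ∈ S) (hy : y ∈ S)
    (hw : w ∈ S) (hwy : G.Adj w y) (hwx : ¬ G.Adj w x) (hxw : x ≠ w)
    (hle : (G.neighborSet y ∩ S).ncard ≤ (G.neighborSet x ∩ S).ncard) :
    ∃ z ∈ S, G.Adj x z ∧ ¬ G.Adj y z ∧ z ≠ y := by
  have hwB : w ∈ (G.neighborSet y ∩ S) \ {x} := ⟨⟨hwy.symm, hw⟩, hxw.symm⟩
  have hwA : w ∉ (G.neighborSet x ∩ S) \ {y} := fun h => hwx h.1.1.symm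
  have hcard : ((G.neighborSet y ∩ S) \ {x}).ncard ≤ ((G.neighborSet x ∩ S) \ {y}).ncard := by
    by_cases hxy : G.Adj x y
    · have hxN : x ∈ G.neighborSet y ∩ S := ⟨hxy.symm, hx⟩
      have hyN : y ∈ G.neighborSet x ∩ S := ⟨hxy, hy⟩
      rw [Set.ncard_sdiff_singleton_of_mem hxN, Set.ncard_sdiff_singleton_of_mem hyN]
      omega
    · rwa [Set.sdiff_singleton_eq_self fun h => hxy h.1.symm,
        Set.sdiff_singleton_eq_self fun h => hxy h.1]
  obtain ⟨z, ⟨⟨hxz, hz⟩, hzy⟩, hzB⟩ :=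
    Set.not_subset.1 fun hAB => hwA (Set.eq_of_subset_of_ncard_le hAB hcard ▸ hwB)
  exact ⟨z, hz, hxz, fun hyz => hzB ⟨⟨hyz, hz⟩, (G.ne_of_adj hxz).symm⟩, hzy⟩

theorem exists_isSwapWithin_neighborSet_eq [Finite V] {w x y : V} (hx : x ∈ S) (hy : y ∈ S)
    (hw : w ∈ S) (hwy : G.Adj w y) (hwx : ¬ G.Adj w x) (hxw : x ≠ w)
    (hle : (G.neighborSet y ∩ S).ncard ≤ (G.neighborSet x ∩ S).ncard) :
    ∃ H, IsSwapWithin S G H ∧ H.neighborSet w = insert x (G.neighborSet w \ {y}) := by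
  obtain ⟨z, hz, hxz, hyz, hzy⟩ := exists_adj_not_adj_of_ncard_le hx hy hw hwy hwx hxw hle
  have hzw : z ≠ w := by rintro rfl; exact hwx hxz.symm
  have hxy : x ≠ y := by rintro rfl; exact hwx hwy
  obtain ⟨H, hH⟩ := IsSwapAt.exists_of_adj (G.ne_of_adj hxz).symm hzw hzy hxw hxy
    (G.ne_of_adj hwy) hxz.symm hwy (fun h => hwx h.symm) (fun h => hyz h.symm)
  exact ⟨H, hH.isSwapWithin hz hx hw hy, hH.neighborSet_eq_insert⟩

variable [Fintype V]

theorem exists_reflTransGen_neighborSet_sdiff_eq (hdeg : ∀ v, gdeg G v = gdeg G' v)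
    (hS : ∀ u ∉ S, G.neighborSet u = G'.neighborSet u) {w x y : V} (hyG : G.Adj w y)
    (hyG' : ¬ G'.Adj w y) (hxG' : G'.Adj w x) (hxG : ¬ G.Adj w x) :
    ∃ H H', ReflTransGen IsSwap G H ∧ ReflTransGen IsSwap G' H' ∧ (∀ v, gdeg H v = gdeg H' v) ∧
      (∀ u ∉ S, H.neighborSet u = H'.neighborSet u) ∧
      H.neighborSet w \ H'.neighborSet w = (G.neighborSet w \ G'.neighborSet w) \ {y} := by
  have hw : w ∈ S := mem_of_adj_of_not_adj hS hyG hyG'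
  have hy : y ∈ S := mem_of_adj_of_not_adj hS hyG.symm (mt G'.adj_symm hyG')
  have hx : x ∈ S := mem_of_adj_of_not_adj (fun u hu => (hS u hu).symm) hxG'.symm
    (mt G.adj_symm hxG)
  rcases le_total (G.neighborSet y ∩ S).ncard (G.neighborSet x ∩ S).ncard with hle | hle
  · obtain ⟨H, hswap, hH⟩ := exists_isSwapWithin_neighborSet_eq hx hy hw hyG hxG
      (G'.ne_of_adj hxG').symm hle
    refine ⟨H, G', .single hswap.isSwap, .refl, fun v => ?_, fun u hu => ?_, ?_⟩
    · rw [hswap.isSwap.gdeg_eq, hdeg]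
    · rw [hswap.neighborSet_eq_of_notMem hu, hS u hu]
    · ext u
      simp only [hH, Set.mem_sdiff, Set.mem_insert_iff, Set.mem_singleton_iff, mem_neighborSet]
      grind
  · rw [ncard_neighborSet_inter_eq hS (hdeg y), ncard_neighborSet_inter_eq hS (hdeg x)] at hle
    obtain ⟨H', hswap, hH'⟩ := exists_isSwapWithin_neighborSet_eq hy hx hw hxG' hyG'
      (G.ne_of_adj hyG).symm hle
    refine ⟨G, H', .refl, .single hswap.isSwap, fun v => ?_, fun u hu => ?_, ?_⟩
    · rw [hswap.isSwap.gdeg_eq, hdeg]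
    · rw [hswap.neighborSet_eq_of_notMem hu, hS u hu]
    · ext u
      simp only [hH', Set.mem_sdiff, Set.mem_insert_iff, Set.mem_singleton_iff, mem_neighborSet]
      grind

theorem exists_reflTransGen_neighborSet_eq (w : V) (hdeg : ∀ v, gdeg G v = gdeg G' v)
    (hS : ∀ u ∉ S, G.neighborSet u = G'.neighborSet u) :
    ∃ G₁ G₁', ReflTransGen IsSwap G G₁ ∧ ReflTransGen IsSwap G' G₁' ∧
      (∀ u ∉ S, G₁.neighborSet u = G₁'.neighborSet u) ∧
      G₁.neighborSet w = G₁'.neighborSet w := by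
  obtain ⟨n, hn⟩ : ∃ n, (G.neighborSet w \ G'.neighborSet w).ncard = n := ⟨_, rfl⟩
  induction n generalizing G G' with
  | zero =>
    refine ⟨G, G', .refl, .refl, hS, Set.eq_of_subset_of_ncard_le ?_ (hdeg w).ge⟩
    exact Set.sdiff_eq_empty.1 ((Set.ncard_eq_zero (Set.toFinite _)).1 hn)
  | succ n ih =>
    by_cases heq : G.neighborSet w = G'.neighborSet w
    · exact ⟨G, G', .refl, .refl, hS, heq⟩
    obtain ⟨y, hy⟩ : (G.neighborSet w \ G'.neighborSet w).Nonempty :=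
      Set.sdiff_nonempty.2 fun hsub => heq (Set.eq_of_subset_of_ncard_le hsub (hdeg w).ge)
    obtain ⟨x, hxG', hxG⟩ : (G'.neighborSet w \ G.neighborSet w).Nonempty :=
      Set.sdiff_nonempty.2 fun hsub => heq (Set.eq_of_subset_of_ncard_le hsub (hdeg w).le).symm
    obtain ⟨H, H', hGH, hGH', hdegH, hSH, hmeas⟩ :=
      exists_reflTransGen_neighborSet_sdiff_eq hdeg hS hy.1 hy.2 hxG' hxG
    obtain ⟨G₁, G₁', h₁, h₁', hS₁, hw₁⟩ := ih hdegH hSH (by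
      rw [hmeas, Set.ncard_sdiff_singleton_of_mem hy, hn, Nat.add_sub_cancel])
    exact ⟨G₁, G₁', hGH.trans h₁, hGH'.trans h₁', hS₁, hw₁⟩

theorem reflTransGen_isSwap_of_gdeg_eq (S : Finset V) (hdeg : ∀ v, gdeg G v = gdeg G' v)
    (hS : ∀ u ∉ S, G.neighborSet u = G'.neighborSet u) : ReflTransGen IsSwap G G' := by
  classical
  induction S using Finset.induction_on generalizing G G' with
  | empty =>
    obtain rfl : G = G' := by
      ext u v
      exact Set.ext_iff.1 (hS u (Finset.notMem_empty u)) v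
    exact .refl
  | insert w S _ ih =>
    obtain ⟨G₁, G₁', h₁, h₁', hS₁, hw₁⟩ :=
      exists_reflTransGen_neighborSet_eq (S := ↑(insert w S)) w hdeg hS
    have hdeg₁ : ∀ v, gdeg G₁ v = gdeg G₁' v := fun v => by
      rw [gdeg_eq_of_reflTransGen h₁, gdeg_eq_of_reflTransGen h₁', hdeg]
    have hS₁' : ∀ u ∉ S, G₁.neighborSet u = G₁'.neighborSet u := fun u hu => by
      by_cases huw : u = w
      · exact huw ▸ hw₁
      · exact hS₁ u (by simp [huw, hu])
    exact h₁.trans ((ih hdeg₁ hS₁').trans (symm h₁'))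

theorem reflTransGen_isSwap_of_isRealization {d : V → ℕ} (hG : IsRealization G d)
    (hG' : IsRealization G' d) : ReflTransGen IsSwap G G' :=
  reflTransGen_isSwap_of_gdeg_eq Finset.univ (fun v => (hG v).trans (hG' v).symm) (by simp)

end Connectivity

/-- For a graphical degree sequence, the attainable crossing-edge counts are exactly the
values between the minimum `m` and the maximum `M` that are congruent to `m` mod `2`. -/
theorem crossCount_attainable_iff {V : Type*} [Fintype V] (U W : Set V)
    (hUW : Disjoint U W) (hcov : U ∪ W = Set.univ) (d : V → ℕ) (m M : ℕ)
    (hm : IsLeast {n | ∃ G : SimpleGraph V, IsRealization G d ∧ crossCount U W G = n} m)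
    (hM : IsGreatest {n | ∃ G : SimpleGraph V, IsRealization G d ∧ crossCount U W G = n} M) :
    ∀ k : ℕ, (∃ G : SimpleGraph V, IsRealization G d ∧ crossCount U W G = k) ↔
      (m ≤ k ∧ k ≤ M ∧ k % 2 = m % 2) := by
  obtain ⟨⟨Gm, hGm, rfl⟩, hmin⟩ := hm
  obtain ⟨⟨GM, hGM, rfl⟩, hmax⟩ := hM
  intro k
  constructor
  · rintro ⟨G, hG, rfl⟩
    have hGk : crossCount U W G ∈ {n | ∃ G, IsRealization G d ∧ crossCount U W G = n} :=
      ⟨G, hG, rfl⟩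
    exact ⟨hmin hGk, hmax hGk, crossCount_mod_two_of_reflTransGen hUW hcov
      (reflTransGen_isSwap_of_isRealization hGm hG)⟩
  · rintro ⟨hmk, hkM, hpar⟩
    obtain ⟨X, hX, rfl⟩ := exists_crossCount_eq_of_reflTransGen hUW hcov
      (reflTransGen_isSwap_of_isRealization hGm hGM) hmk hkM hpar
    exact ⟨X, fun v => (gdeg_eq_of_reflTransGen hX v).trans (hGm v), rfl⟩
end

section
/- There exist a finite vertex set V, a degree sequence d : V → ℕ, a bipartition of V into disjoint parts U and W, a natural number k, and two realizations G and G' of d with ε(G) = ε(G') = k, such that there is no finite sequence of graphs G = G_0, G_1, …, G_t = G' in which each G_{i+1} is obtained from G_i by a swap and every G_i is a realization of d with ε(G_i) = k. -/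
open SimpleGraph

variable {V : Type*}

/-!
Take `V = Fin 8`, `U = {0, 2, 3, 6}`, and let `G₀` be the graph in which `0` and `1` are adjacent
to each other and to every other vertex except the pairs `06` and `17`, together with the edges
`23` and `45`. Up to relabelling, `G₀` admits only three swaps: `07, 16 ↦ 06, 17`, which destroys
two crossing edges, and `23, 45 ↦ 24, 35` or `25, 34`, which create two. So every swap moves `G₀`
off the level `ε = 7`, whereas performing `07, 16 ↦ 06, 17` and `23, 45 ↦ 24, 35` simultaneously
gives a different realization `G₁` with `ε = 7`.
-/

namespace Set

theorem ncard_sdiff_union_inter_add {α : Type*} {E R A C : Set α} (hE : E.Finite) (hA : A.Finite)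
    (hRE : R ⊆ E) (hAE : Disjoint A E) :
    ((E \ R ∪ A) ∩ C).ncard + (R ∩ C).ncard = (E ∩ C).ncard + (A ∩ C).ncard := by
  have hdisj : Disjoint ((E \ R) ∩ C) (A ∩ C) :=
    (Disjoint.mono inter_subset_left ((inter_subset_left (t := C)).trans sdiff_subset) hAE).symm
  rw [union_inter_distrib_right, ncard_union_eq hdisj (hE.sdiff.inter_of_left C)
    (hA.inter_of_left C), inter_sdiff_distrib_right, add_right_comm,
    ncard_sdiff_add_ncard_of_subset (inter_subset_inter_left C hRE) (hE.inter_of_left C)]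

theorem ncard_coe_finset_inter_setOf {α : Type*} (s : Finset α) (p : α → Prop) [DecidablePred p] :
    ((s : Set α) ∩ {x | p x}).ncard = (s.filter p).card := by
  rw [← ncard_coe_finset, Finset.coe_filter]
  rfl

end Set

def IsCrossing (U W : Set V) (e : Sym2 V) : Prop := ∃ u ∈ U, ∃ w ∈ W, e = s(u, w)

instance [Fintype V] [DecidableEq V] {U W : Set V} [DecidablePred (· ∈ U)]
    [DecidablePred (· ∈ W)] : DecidablePred (IsCrossing U W) :=
  fun e => inferInstanceAs (Decidable (∃ u ∈ U, ∃ w ∈ W, e = s(u, w)))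

theorem crossCount_eq_ncard (U W : Set V) (G : SimpleGraph V) :
    crossCount U W G = (G.edgeSet ∩ {e | IsCrossing U W e}).ncard := rfl

theorem crossCount_eq_card_filter [Fintype V] [DecidableEq V] (U W : Set V)
    [DecidablePred (· ∈ U)] [DecidablePred (· ∈ W)] (G : SimpleGraph V) [DecidableRel G.Adj] :
    crossCount U W G = (G.edgeFinset.filter (IsCrossing U W)).card := by
  rw [crossCount_eq_ncard, ← coe_edgeFinset, Set.ncard_coe_finset_inter_setOf]

theorem isRealization_iff_degree_eq [Fintype V] (G : SimpleGraph V) [DecidableRel G.Adj]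
    (d : V → ℕ) : IsRealization G d ↔ ∀ v, G.degree v = d v := by
  simp only [IsRealization, gdeg, ← card_neighborSet_eq_degree, ← Nat.card_eq_fintype_card,
    Nat.card_coe_set_eq]

theorem crossCount_add_of_swap [Finite V] {U W : Set V} {G G' : SimpleGraph V} {a b c d : V}
    (hab : G.Adj a b) (hcd : G.Adj c d) (hbc : ¬ G.Adj b c) (had : ¬ G.Adj a d)
    (hG' : G'.edgeSet = (G.edgeSet \ {s(a, b), s(c, d)}) ∪ {s(b, c), s(a, d)}) :
    crossCount U W G' + ({s(a, b), s(c, d)} ∩ {e | IsCrossing U W e}).ncard =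
      crossCount U W G + ({s(b, c), s(a, d)} ∩ {e | IsCrossing U W e}).ncard := by
  rw [crossCount_eq_ncard, crossCount_eq_ncard, hG']
  refine Set.ncard_sdiff_union_inter_add (Set.toFinite _) (Set.toFinite _) ?_ ?_
  · simp [Set.insert_subset_iff, hab, hcd]
  · simp [Set.disjoint_left, hbc, had]

theorem not_exists_swap_path_of_forall_isSwap {P : SimpleGraph V → Prop} {G G' : SimpleGraph V}
    (hne : G ≠ G') (hG : ∀ H, IsSwap G H → ¬ P H) :
    ¬ ∃ (t : ℕ) (f : ℕ → SimpleGraph V), f 0 = G ∧ f t = G' ∧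
      (∀ i < t, IsSwap (f i) (f (i + 1))) ∧ (∀ i ≤ t, P (f i)) := by
  rintro ⟨t, f, rfl, rfl, hswap, hP⟩
  cases t with
  | zero => exact hne rfl
  | succ t => exact hG (f 1) (hswap 0 t.succ_pos) (hP 1 (by omega))

namespace SwapCounterexample

def listGraph {n : ℕ} (l : List (Fin n × Fin n)) : SimpleGraph (Fin n) :=
  SimpleGraph.fromRel fun i j => (i, j) ∈ l

instance {n : ℕ} (l : List (Fin n × Fin n)) : DecidableRel (listGraph l).Adj :=
  fun i j => inferInstanceAs (Decidable (i ≠ j ∧ ((i, j) ∈ l ∨ (j, i) ∈ l)))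

def G₀ : SimpleGraph (Fin 8) := listGraph
  [(0,1), (0,2), (0,3), (0,4), (0,5), (0,7), (1,2), (1,3), (1,4), (1,5), (1,6), (2,3), (4,5)]

def G₁ : SimpleGraph (Fin 8) := listGraph
  [(0,1), (0,2), (0,3), (0,4), (0,5), (0,6), (1,2), (1,3), (1,4), (1,5), (1,7), (2,4), (3,5)]

instance : DecidableRel G₀.Adj := inferInstanceAs (DecidableRel (listGraph _).Adj)
instance : DecidableRel G₁.Adj := inferInstanceAs (DecidableRel (listGraph _).Adj)

def U₀ : Set (Fin 8) := {0, 2, 3, 6}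

instance : DecidablePred (· ∈ U₀) :=
  fun v => inferInstanceAs (Decidable (v = 0 ∨ v = 2 ∨ v = 3 ∨ v = 6))

def degSeq : Fin 8 → ℕ := ![6, 6, 3, 3, 3, 3, 1, 1]

theorem G₀_isRealization : IsRealization G₀ degSeq :=
  (isRealization_iff_degree_eq _ _).2 (by decide)

theorem G₁_isRealization : IsRealization G₁ degSeq :=
  (isRealization_iff_degree_eq _ _).2 (by decide)

theorem crossCount_G₀ : crossCount U₀ U₀ᶜ G₀ = 7 := by
  rw [crossCount_eq_card_filter]
  decide

theorem crossCount_G₁ : crossCount U₀ U₀ᶜ G₁ = 7 := by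
  rw [crossCount_eq_card_filter]
  decide

theorem G₀_ne_G₁ : G₀ ≠ G₁ := by
  intro h
  have h₀ : G₀.Adj 2 3 := by decide
  have h₁ : ¬ G₁.Adj 2 3 := by decide
  exact h₁ (h ▸ h₀)

theorem card_filter_isCrossing_ne_of_swap : ∀ a b c d : Fin 8,
    a ≠ d → b ≠ c → G₀.Adj a b → G₀.Adj c d → ¬ G₀.Adj b c → ¬ G₀.Adj a d →
    (({s(a, b), s(c, d)} : Finset _).filter (IsCrossing U₀ U₀ᶜ)).card ≠
      (({s(b, c), s(a, d)} : Finset _).filter (IsCrossing U₀ U₀ᶜ)).card := by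
  decide

theorem crossCount_ne_of_isSwap {H : SimpleGraph (Fin 8)} (hH : IsSwap G₀ H) :
    crossCount U₀ U₀ᶜ H ≠ 7 := by
  obtain ⟨a, b, c, d, -, -, -, -, -, -, had_ne, hbc_ne, -, -, hab, hcd, hbc, had, hE⟩ := hH
  have hcount := crossCount_add_of_swap (U := U₀) (W := U₀ᶜ) hab hcd hbc had hE
  rw [crossCount_G₀, ← Finset.coe_pair, ← Finset.coe_pair, Set.ncard_coe_finset_inter_setOf,
    Set.ncard_coe_finset_inter_setOf] at hcount
  have hne := card_filter_isCrossing_ne_of_swap a b c d had_ne hbc_ne hab hcd hbc had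
  omega

end SwapCounterexample

open SwapCounterexample in
/-- There are two realizations of the same degree sequence with the same number `k` of
crossing edges that cannot be connected by a sequence of swaps all of whose intermediate
graphs are realizations with exactly `k` crossing edges. -/
theorem swap_connectivity_counterexample :
    ∃ (V : Type) (_ : Fintype V) (d : V → ℕ) (U W : Set V) (k : ℕ)
      (G G' : SimpleGraph V),
      Disjoint U W ∧ U ∪ W = Set.univ ∧
      IsRealization G d ∧ IsRealization G' d ∧
      crossCount U W G = k ∧ crossCount U W G' = k ∧
      ¬ ∃ (t : ℕ) (f : ℕ → SimpleGraph V), f 0 = G ∧ f t = G' ∧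
          (∀ i < t, IsSwap (f i) (f (i + 1))) ∧
          (∀ i ≤ t, IsRealization (f i) d ∧ crossCount U W (f i) = k) :=
  ⟨Fin 8, inferInstance, degSeq, U₀, U₀ᶜ, 7, G₀, G₁, disjoint_compl_right, Set.union_compl_self _,
    G₀_isRealization, G₁_isRealization, crossCount_G₀, crossCount_G₁,
    not_exists_swap_path_of_forall_isSwap
      (P := fun H => IsRealization H degSeq ∧ crossCount U₀ U₀ᶜ H = 7) G₀_ne_G₁
      fun _ hH h => crossCount_ne_of_isSwap hH h.2⟩
end

section
/- Let π : V → C be a map from the finite vertex set V to a set C of classes, and for a simple graph G on V and classes P, Q ∈ C let w_G(P,Q) denote the number of edges xy of G with {π(x), π(y)} = {P, Q}. Let G' be obtained from G by the swap replacing edges ab, cd by bc, ad (where a, b, c, d are distinct, ab, cd ∈ E(G), bc, ad ∉ E(G)). Then w_{G'}(P,Q) = w_G(P,Q) for all classes P, Q if and only if π(a) = π(c) or π(b) = π(d). -/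
open SimpleGraph

variable {V : Type*}

private lemma wcount_eq_aux {V C : Type*} (π : V → C) (G : SimpleGraph V) (P Q : C) :
    wcount π G P Q = {e ∈ G.edgeSet | Sym2.map π e = s(P, Q)}.ncard := by
  unfold wcount
  congr 1
  ext e
  simp only [Set.mem_setOf_eq]
  refine and_congr_right fun _ => ?_
  induction e using Sym2.ind with
  | _ u v =>
    constructor
    · rintro ⟨x, y, hxy, hP, hQ⟩
      rcases Sym2.eq_iff.mp hxy with ⟨rfl, rfl⟩ | ⟨rfl, rfl⟩
      · rw [Sym2.map_pair_eq, hP, hQ]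
      · rw [Sym2.map_pair_eq, hP, hQ]; exact Sym2.eq_swap
    · intro h
      rw [Sym2.map_pair_eq, Sym2.eq_iff] at h
      rcases h with ⟨hP, hQ⟩ | ⟨hP, hQ⟩
      · exact ⟨u, v, rfl, hP, hQ⟩
      · exact ⟨v, u, Sym2.eq_swap, hQ, hP⟩

private lemma swap_wcount_of_eq {V C : Type*} (π : V → C)
    (G G' : SimpleGraph V) (a b c d : V)
    (hab : a ≠ b) (hac : a ≠ c) (had : a ≠ d) (hbc : b ≠ c) (hbd : b ≠ d) (hcd : c ≠ d)
    (h₁ : G.Adj a b) (h₂ : G.Adj c d) (h₃ : ¬ G.Adj b c) (h₄ : ¬ G.Adj a d)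
    (hE : G'.edgeSet = (G.edgeSet \ {s(a, b), s(c, d)}) ∪ {s(b, c), s(a, d)})
    (hπ : π a = π c) (P Q : C) : wcount π G' P Q = wcount π G P Q := by
  classical
  have d12 : s(a,b) ≠ s(c,d) := by simp [Sym2.eq_iff, hac, had, hbc, hbd]
  have d13 : s(a,b) ≠ s(b,c) := by simp [Sym2.eq_iff, hab, hac]
  have d14 : s(a,b) ≠ s(a,d) := by simp [Sym2.eq_iff, hbd, had, hab.symm]
  have d23 : s(c,d) ≠ s(b,c) := by simp [Sym2.eq_iff, hbc.symm, hcd.symm, hbd.symm]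
  have d24 : s(c,d) ≠ s(a,d) := by simp [Sym2.eq_iff, hac.symm, hcd]
  have d34 : s(b,c) ≠ s(a,d) := by simp [Sym2.eq_iff, hab.symm, hcd, hbd, hac.symm]
  set f : Sym2 V → Sym2 V := fun e =>
    if e = s(a,b) then s(b,c) else if e = s(b,c) then s(a,b)
    else if e = s(c,d) then s(a,d) else if e = s(a,d) then s(c,d) else e with hf
  have fe1 : f s(a,b) = s(b,c) := by simp [hf]
  have fe3 : f s(b,c) = s(a,b) := by simp [hf, d13.symm]
  have fe2 : f s(c,d) = s(a,d) := by simp [hf, d12.symm, d23]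
  have fe4 : f s(a,d) = s(c,d) := by simp [hf, d14.symm, d34.symm, d24.symm]
  have fother : ∀ e, e ≠ s(a,b) → e ≠ s(b,c) → e ≠ s(c,d) → e ≠ s(a,d) → f e = e := by
    intro e k1 k3 k2 k4; simp [hf, k1, k2, k3, k4]
  have hinv : Function.Involutive f := by
    intro e
    by_cases k1 : e = s(a,b)
    · subst k1; rw [fe1, fe3]
    by_cases k3 : e = s(b,c)
    · subst k3; rw [fe3, fe1]
    by_cases k2 : e = s(c,d)
    · subst k2; rw [fe2, fe4]
    by_cases k4 : e = s(a,d)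
    · subst k4; rw [fe4, fe2]
    rw [fother e k1 k3 k2 k4, fother e k1 k3 k2 k4]
  have hm : ∀ e, Sym2.map π (f e) = Sym2.map π e := by
    intro e
    by_cases k1 : e = s(a,b)
    · subst k1; rw [fe1, Sym2.map_pair_eq, Sym2.map_pair_eq, ← hπ]; exact Sym2.eq_swap
    by_cases k3 : e = s(b,c)
    · subst k3; rw [fe3, Sym2.map_pair_eq, Sym2.map_pair_eq, hπ]; exact Sym2.eq_swap
    by_cases k2 : e = s(c,d)
    · subst k2; rw [fe2, Sym2.map_pair_eq, Sym2.map_pair_eq, hπ]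
    by_cases k4 : e = s(a,d)
    · subst k4; rw [fe4, Sym2.map_pair_eq, Sym2.map_pair_eq, ← hπ]
    rw [fother e k1 k3 k2 k4]
  have hkey : ∀ e, e ∈ G'.edgeSet ↔ f e ∈ G.edgeSet := by
    intro e
    rw [hE]
    by_cases k1 : e = s(a,b)
    · subst k1; rw [fe1]
      simp [d13, d14, SimpleGraph.mem_edgeSet, h₃]
    by_cases k3 : e = s(b,c)
    · subst k3; rw [fe3]
      simp [SimpleGraph.mem_edgeSet, h₁]
    by_cases k2 : e = s(c,d)
    · subst k2; rw [fe2]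
      simp [d23, d24, SimpleGraph.mem_edgeSet, h₄]
    by_cases k4 : e = s(a,d)
    · subst k4; rw [fe4]
      simp [SimpleGraph.mem_edgeSet, h₂]
    rw [fother e k1 k3 k2 k4]
    simp [k1, k2, k3, k4]
  have hS : {e ∈ G'.edgeSet | Sym2.map π e = s(P,Q)} =
      f ⁻¹' {e ∈ G.edgeSet | Sym2.map π e = s(P,Q)} := by
    ext e
    simp only [Set.mem_preimage, Set.mem_setOf_eq, hm e, hkey e]
  have hpre : f ⁻¹' {e ∈ G.edgeSet | Sym2.map π e = s(P,Q)} =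
      f '' {e ∈ G.edgeSet | Sym2.map π e = s(P,Q)} := by
    ext e
    simp only [Set.mem_preimage, Set.mem_image]
    constructor
    · intro h; exact ⟨f e, h, hinv e⟩
    · rintro ⟨x, hx, rfl⟩; rwa [hinv x]
  rw [wcount_eq_aux, wcount_eq_aux, hS, hpre,
    Set.ncard_image_of_injective _ hinv.injective]

/-- A swap `ab, cd ⇒ bc, ad` preserves all class-pair edge counts if and only if
`π a = π c` or `π b = π d`. -/
theorem swap_preserves_wcount_iff {V : Type*} {C : Type*} [Fintype V] (π : V → C)
    (G G' : SimpleGraph V) (a b c d : V)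
    (hab : a ≠ b) (hac : a ≠ c) (had : a ≠ d) (hbc : b ≠ c) (hbd : b ≠ d) (hcd : c ≠ d)
    (h₁ : G.Adj a b) (h₂ : G.Adj c d) (h₃ : ¬ G.Adj b c) (h₄ : ¬ G.Adj a d)
    (hE : G'.edgeSet = (G.edgeSet \ {s(a, b), s(c, d)}) ∪ {s(b, c), s(a, d)}) :
    (∀ P Q : C, wcount π G' P Q = wcount π G P Q) ↔ (π a = π c ∨ π b = π d) := by
  classical
  constructor
  · intro h
    by_contra hn
    push_neg at hn
    obtain ⟨hπac, hπbd⟩ := hn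
    have hone : s(a,b) ∈ {e ∈ G.edgeSet | Sym2.map π e = s(π a, π b)} := by
      simp [SimpleGraph.mem_edgeSet, h₁, Sym2.map_pair_eq]
    have hsub : {e ∈ G'.edgeSet | Sym2.map π e = s(π a, π b)} ⊆
        {e ∈ G.edgeSet | Sym2.map π e = s(π a, π b)} \ {s(a,b)} := by
      rintro e ⟨heE', hep⟩
      rw [hE] at heE'
      rcases heE' with ⟨heE, hne⟩ | he34
      · refine ⟨⟨heE, hep⟩, ?_⟩
        simp only [Set.mem_insert_iff, Set.mem_singleton_iff, not_or] at hne
        simpa using hne.1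
      · exfalso
        rcases he34 with he3 | he4
        · rw [he3, Sym2.map_pair_eq, Sym2.eq_iff] at hep
          rcases hep with ⟨h1, h2⟩ | ⟨h1, h2⟩
          · exact hπac (h2.trans h1).symm
          · exact hπac h2.symm
        · rw [Set.mem_singleton_iff] at he4
          rw [he4, Sym2.map_pair_eq, Sym2.eq_iff] at hep
          rcases hep with ⟨h1, h2⟩ | ⟨h1, h2⟩
          · exact hπbd h2.symm
          · exact hπbd (h1.symm.trans h2.symm)
    have hlt : wcount π G' (π a) (π b) < wcount π G (π a) (π b) := by
      rw [wcount_eq_aux, wcount_eq_aux]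
      exact lt_of_le_of_lt (Set.ncard_le_ncard hsub ((Set.toFinite _)))
        (Set.ncard_diff_singleton_lt_of_mem hone (Set.toFinite _))
    exact absurd (h (π a) (π b)) (ne_of_lt hlt)
  · rintro (hπ | hπ)
    · intro P Q
      exact swap_wcount_of_eq π G G' a b c d hab hac had hbc hbd hcd h₁ h₂ h₃ h₄ hE hπ P Q
    · intro P Q
      have hE' : G'.edgeSet = (G.edgeSet \ {s(b,a), s(d,c)}) ∪ {s(a,d), s(b,c)} := by
        rw [hE, show s(b,a) = s(a,b) from Sym2.eq_swap,
          show s(d,c) = s(c,d) from Sym2.eq_swap, Set.pair_comm s(a,d) s(b,c)]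
      exact swap_wcount_of_eq π G G' b a d c hab.symm hbd hbc had hac hcd.symm
        h₁.symm h₂.symm h₄ h₃ hE' hπ P Q
end

section
/- Let R and B be simple graphs on the same finite vertex set V with E(R) ∩ E(B) = ∅ and deg_R(v) = deg_B(v) for every vertex v. Let u, x, v be three distinct vertices with uv ∈ E(R) and xv ∈ E(B). Then there exists a vertex a ∉ {u, v, x} with ua ∈ E(B) and xa ∉ E(B), or there exists a vertex b ∉ {u, v, x} with xb ∈ E(R) and ub ∉ E(R). -/
open SimpleGraph

variable {V : Type*}

/-- In a pair of edge-disjoint graphs `R`, `B` with equal degrees, given `uv ∈ E(R)` and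
`xv ∈ E(B)`, there is `a ∉ {u,v,x}` with `ua ∈ E(B)`, `xa ∉ E(B)`, or `b ∉ {u,v,x}` with
`xb ∈ E(R)`, `ub ∉ E(R)`. -/
theorem red_blue_third_vertex {V : Type*} [Fintype V] (R B : SimpleGraph V)
    (hdisj : Disjoint R.edgeSet B.edgeSet)
    (hdeg : ∀ v, gdeg R v = gdeg B v)
    (u x v : V) (hux : u ≠ x) (huv : u ≠ v) (hxv : x ≠ v)
    (hR : R.Adj u v) (hB : B.Adj x v) :
    (∃ a, a ∉ ({u, v, x} : Set V) ∧ B.Adj u a ∧ ¬ B.Adj x a) ∨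
    (∃ b, b ∉ ({u, v, x} : Set V) ∧ R.Adj x b ∧ ¬ R.Adj u b) := by
  by_contra hcon
  push_neg at hcon
  obtain ⟨hA, hBc⟩ := hcon
  have hRB : ∀ {p q : V}, R.Adj p q → ¬ B.Adj p q := by
    intro p q hr hb
    exact Set.disjoint_left.mp hdisj (R.mem_edgeSet.2 hr) (B.mem_edgeSet.2 hb)
  -- Step 1: deg_B u < deg_B x
  have h1sub : insert v (B.neighborSet u) ⊆ insert x (B.neighborSet x) := by
    intro a ha
    rcases ha with rfl | ha
    · exact Set.mem_insert_of_mem _ hB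
    · have hba : B.Adj u a := ha
      by_cases hax : a = x
      · exact hax ▸ Set.mem_insert _ _
      · refine Set.mem_insert_of_mem _ (hA a ?_ hba)
        intro hmem
        rcases hmem with rfl | rfl | rfl
        · exact hba.ne rfl
        · exact hRB hR hba
        · exact hax rfl
  have h1ss : insert v (B.neighborSet u) ⊂ insert x (B.neighborSet x) := by
    refine ⟨h1sub, fun hsup => ?_⟩
    by_cases hbx : B.Adj u x
    · have hu : u ∈ insert x (B.neighborSet x) :=
        Set.mem_insert_of_mem _ hbx.symm
      rcases hsup hu with rfl | hu'
      · exact huv rfl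
      · exact B.irrefl hu'
    · have hx : x ∈ insert x (B.neighborSet x) := Set.mem_insert _ _
      rcases hsup hx with rfl | hx'
      · exact hxv rfl
      · exact hbx hx'
  have h1 : gdeg B u < gdeg B x := by
    have hvB : v ∉ B.neighborSet u := fun h => hRB hR h
    have hxB : x ∉ B.neighborSet x := B.irrefl
    have := Set.ncard_lt_ncard h1ss (Set.toFinite _)
    rwa [Set.ncard_insert_of_notMem hvB (Set.toFinite _),
      Set.ncard_insert_of_notMem hxB (Set.toFinite _), Nat.add_lt_add_iff_right] at this
  -- Step 2: deg_R x < deg_R u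
  have h2sub : insert v (R.neighborSet x) ⊆ insert u (R.neighborSet u) := by
    intro b hb
    rcases hb with rfl | hb
    · exact Set.mem_insert_of_mem _ hR
    · have hrb : R.Adj x b := hb
      by_cases hbu : b = u
      · exact hbu ▸ Set.mem_insert _ _
      · refine Set.mem_insert_of_mem _ (hBc b ?_ hrb)
        intro hmem
        rcases hmem with rfl | rfl | rfl
        · exact hbu rfl
        · exact hRB hrb hB
        · exact hrb.ne rfl
  have h2ss : insert v (R.neighborSet x) ⊂ insert u (R.neighborSet u) := by
    refine ⟨h2sub, fun hsup => ?_⟩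
    by_cases hru : R.Adj x u
    · have hx : x ∈ insert u (R.neighborSet u) :=
        Set.mem_insert_of_mem _ hru.symm
      rcases hsup hx with rfl | hx'
      · exact hxv rfl
      · exact R.irrefl hx'
    · have hu : u ∈ insert u (R.neighborSet u) := Set.mem_insert _ _
      rcases hsup hu with rfl | hu'
      · exact huv rfl
      · exact hru hu'
  have h2 : gdeg R x < gdeg R u := by
    have hvR : v ∉ R.neighborSet x := fun h => hRB h hB
    have huR : u ∉ R.neighborSet u := R.irrefl
    have := Set.ncard_lt_ncard h2ss (Set.toFinite _)
    rwa [Set.ncard_insert_of_notMem hvR (Set.toFinite _),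
      Set.ncard_insert_of_notMem huR (Set.toFinite _), Nat.add_lt_add_iff_right] at this
  have e1 := hdeg u
  have e2 := hdeg x
  omega
end

section
/- Let n ≥ 3 be odd and let the finite vertex set V be partitioned into classes U_1, …, U_n. If G is a realization of the degree sequence d : V → ℕ that is weakly consistent with the cycle skeleton on U_1, …, U_n, then 2 · e_G(U_1, U_2) = D(U_1) + Σ_{i=2}^{n} (−1)^i · D(U_i), where D(U) = Σ_{v ∈ U} d(v). -/
open SimpleGraph

variable {V : Type*}

/-! Every vertex of `U i` has all its neighbours in `U (i - 1) ∪ U (i + 1)`, so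
`D(U i) = e(i - 1) + e(i)` with `e(i) = e(U i, U (i + 1))`. In the alternating sum, `e(i)`
receives the coefficients of `D(U i)` and `D(U (i + 1))`; these cancel except at `i = 0`,
where both are `1`, and at the wrap-around `i = n - 1` they are `(-1)^n` and `1`, which
cancel precisely because `n` is odd. -/

open Finset Function

theorem eCount_comm (G : SimpleGraph V) (P Q : Set V) : eCount G P Q = eCount G Q P := by
  unfold eCount
  congr 1
  ext e
  constructor <;> rintro ⟨he, p, hp, q, hq, rfl⟩ <;> exact ⟨he, q, hq, p, hp, Sym2.eq_swap⟩

open Classical in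
theorem eCount_eq_sum_ncard_inter_neighborSet [Fintype V] (G : SimpleGraph V) {P Q : Set V}
    (hPQ : Disjoint P Q) :
    eCount G P Q = ∑ v ∈ P.toFinset, (Q ∩ G.neighborSet v).ncard := by
  have hedges : {e ∈ G.edgeSet | ∃ p ∈ P, ∃ q ∈ Q, e = s(p, q)}.toFinset =
      P.toFinset.biUnion fun v => (Q ∩ G.neighborSet v).toFinset.image (s(v, ·)) := by
    ext e
    simp only [Set.mem_toFinset, Set.mem_ofPred_eq, mem_biUnion, mem_image, Set.mem_inter_iff,
      mem_neighborSet]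
    constructor
    · rintro ⟨he, p, hp, q, hq, rfl⟩
      exact ⟨p, hp, q, ⟨hq, he⟩, rfl⟩
    · rintro ⟨p, hp, q, ⟨hq, hadj⟩, rfl⟩
      exact ⟨hadj, p, hp, q, hq, rfl⟩
  rw [eCount, Set.ncard_eq_toFinset_card', hedges, card_biUnion]
  · refine sum_congr rfl fun v _ => ?_
    rw [card_image_of_injective _ fun _ _ => Sym2.congr_right.1, Set.ncard_eq_toFinset_card']
  · intro x hx y hy hxy
    simp only [onFun, Finset.disjoint_left, mem_image, Set.mem_toFinset, Set.mem_inter_iff]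
    rintro _ ⟨w, ⟨hw, -⟩, rfl⟩ ⟨w', -, hE⟩
    rcases Sym2.eq_iff.1 hE with ⟨rfl, -⟩ | ⟨rfl, rfl⟩
    · exact hxy rfl
    · exact hPQ.ne_of_mem (by simpa using hy) hw rfl

theorem IsRealization.Dsum_eq_eCount_add_eCount [Fintype V] {G : SimpleGraph V} {d : V → ℕ}
    (hG : IsRealization G d) {P Q R : Set V} (hPQ : Disjoint P Q) (hPR : Disjoint P R)
    (hQR : Disjoint Q R) (hnbr : ∀ v ∈ P, G.neighborSet v ⊆ Q ∪ R) :
    Dsum d P = eCount G P Q + eCount G P R := by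
  classical
  rw [eCount_eq_sum_ncard_inter_neighborSet G hPQ, eCount_eq_sum_ncard_inter_neighborSet G hPR,
    ← sum_add_distrib, Dsum, finsum_mem_eq_toFinset_sum]
  refine sum_congr rfl fun v hv => ?_
  rw [← hG v, gdeg, ← Set.ncard_union_eq (hQR.mono Set.inter_subset_left Set.inter_subset_left),
    ← Set.union_inter_distrib_right, Set.inter_eq_right.2 (hnbr v (Set.mem_toFinset.1 hv))]

theorem WeaklyCycleConsistent.neighborSet_subset {n : ℕ} [NeZero n] {U : Fin n → Set V}
    {G : SimpleGraph V} (hwG : WeaklyCycleConsistent n U G) (hdis : Pairwise (Disjoint on U))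
    {i : Fin n} {v : V} (hv : v ∈ U i) : G.neighborSet v ⊆ U (i - 1) ∪ U (i + 1) := by
  have hclass {j : Fin n} (hj : v ∈ U j) : j = i :=
    by_contra fun h => (hdis h).ne_of_mem hj hv rfl
  intro w hw
  obtain ⟨j, x, y, hE, hx, hy⟩ := hwG s(v, w) hw
  rcases Sym2.eq_iff.1 hE with ⟨rfl, rfl⟩ | ⟨rfl, rfl⟩
  · exact Or.inr (hclass hx ▸ hy)
  · left
    rwa [← hclass hy, add_sub_cancel_right]

theorem Fin.sub_one_ne_add_one {n : ℕ} [NeZero n] (hn : 3 ≤ n) (i : Fin n) : i - 1 ≠ i + 1 := by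
  intro h
  have h2 : ((2 : Fin n) : ℕ) = 0 := by
    rw [show (2 : Fin n) = 0 by open Fin.CommRing in linear_combination -h, Fin.val_zero]
  rw [Fin.coe_ofNat_eq_mod, Nat.mod_eq_of_lt (by omega)] at h2
  omega

theorem Dsum_eq_eCount_sub_one_add_eCount_add_one [Fintype V] {n : ℕ} [NeZero n] (hn : 3 ≤ n)
    {U : Fin n → Set V} (hdis : Pairwise (Disjoint on U)) {d : V → ℕ} {G : SimpleGraph V}
    (hG : IsRealization G d) (hwG : WeaklyCycleConsistent n U G) (i : Fin n) :
    Dsum d (U i) = eCount G (U (i - 1)) (U i) + eCount G (U i) (U (i + 1)) := by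
  have h1 : (1 : Fin n) ≠ 0 := Fin.one_eq_zero_iff.not.2 (by omega)
  rw [eCount_comm]
  exact hG.Dsum_eq_eCount_add_eCount (hdis (Ne.symm (sub_eq_self.not.2 h1)))
    (hdis (left_ne_add.2 h1)) (hdis (Fin.sub_one_ne_add_one hn i)) fun v hv => hwG.neighborSet_subset hdis hv

def cycleCoeff (R : Type*) [Ring R] {n : ℕ} (j : Fin n) : R :=
  if j.val = 0 then 1 else (-1) ^ (j.val + 1)

theorem cycleCoeff_add_cycleCoeff_add_one {R : Type*} [Ring R] {n : ℕ} [NeZero n] (hodd : Odd n)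
    (j : Fin n) : cycleCoeff R j + cycleCoeff R (j + 1) = if j = 0 then 2 else 0 := by
  obtain ⟨m, rfl⟩ := Nat.exists_eq_succ_of_ne_zero (NeZero.ne n)
  simp only [cycleCoeff, Fin.val_add_one, Fin.ext_iff, Fin.val_zero]
  have hm : Even m := by rwa [Nat.odd_add_one, Nat.not_odd_iff_even] at hodd
  split_ifs <;> simp_all [pow_succ, hm.neg_one_pow, one_add_one_eq_two]

theorem sum_cycleCoeff_mul_add {R : Type*} [Ring R] {n : ℕ} [NeZero n] (hodd : Odd n)
    (E : Fin n → R) : ∑ j, cycleCoeff R j * (E (j - 1) + E j) = 2 * E 0 := by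
  calc ∑ j, cycleCoeff R j * (E (j - 1) + E j)
      = ∑ j, cycleCoeff R (j + 1) * E j + ∑ j, cycleCoeff R j * E j := by
        simp only [mul_add, sum_add_distrib]
        rw [← Equiv.sum_comp (Equiv.addRight 1) fun j => cycleCoeff R j * E (j - 1)]
        simp only [Equiv.coe_addRight, add_sub_cancel_right]
    _ = ∑ j, (cycleCoeff R j + cycleCoeff R (j + 1)) * E j := by
        rw [add_comm, ← sum_add_distrib]
        simp only [add_mul]
    _ = 2 * E 0 := by simp [cycleCoeff_add_cycleCoeff_add_one hodd, ite_mul]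

theorem odd_cycle_weight_formula_general {V : Type*} [Fintype V] (n : ℕ) [NeZero n]
    (hn : 3 ≤ n) (hodd : Odd n) (U : Fin n → Set V)
    (hdis : ∀ i j : Fin n, i ≠ j → Disjoint (U i) (U j))
    (d : V → ℕ) (G : SimpleGraph V) (hG : IsRealization G d)
    (hwG : WeaklyCycleConsistent n U G) :
    (2 * (eCount G (U 0) (U 1) : ℤ)) =
      ∑ j : Fin n, (if j.val = 0 then 1 else (-1 : ℤ) ^ (j.val + 1)) * (Dsum d (U j) : ℤ) := by
  set E : Fin n → ℤ := fun j => eCount G (U j) (U (j + 1))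
  have hD (j : Fin n) : (Dsum d (U j) : ℤ) = E (j - 1) + E j := by
    simp only [E, Dsum_eq_eCount_sub_one_add_eCount_add_one hn hdis hG hwG j, sub_add_cancel,
      Nat.cast_add]
  calc (2 * eCount G (U 0) (U 1) : ℤ) = 2 * E 0 := by simp [E]
    _ = ∑ j, cycleCoeff ℤ j * (E (j - 1) + E j) := (sum_cycleCoeff_mul_add hodd E).symm
    _ = _ := by simp only [hD, cycleCoeff]

/-- For an odd cycle skeleton, the number of edges on the first bone is determined by the
alternating sum of the class degree sums:
`2·e(U₁,U₂) = D(U₁) + Σ_{i=2}^{n} (-1)^i D(U_i)` (here `0`-indexed). -/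
theorem odd_cycle_weight_formula {V : Type*} [Fintype V] (n : ℕ) [NeZero n]
    (hn : 3 ≤ n) (hodd : Odd n) (U : Fin n → Set V)
    (hdis : ∀ i j : Fin n, i ≠ j → Disjoint (U i) (U j))
    (hcov : (⋃ i, U i) = Set.univ)
    (d : V → ℕ) (G : SimpleGraph V) (hG : IsRealization G d)
    (hwG : WeaklyCycleConsistent n U G) :
    (2 * (eCount G (U 0) (U 1) : ℤ)) =
      ∑ j : Fin n, (if j.val = 0 then 1 else (-1 : ℤ) ^ (j.val + 1)) * (Dsum d (U j) : ℤ) :=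
  odd_cycle_weight_formula_general n hn hodd U hdis d G hG hwG
end

section
/- Let Π be a partition of the finite vertex set V and let T be a tree whose vertices are the classes of Π. If G and G' are realizations of the same degree sequence d : V → ℕ and both are weakly consistent with T (every edge of G, and of G', joins two classes that are adjacent in T), then for every pair of classes P, Q adjacent in T, the number of edges of G with one endpoint in P and the other in Q equals the corresponding number for G', i.e., e_G(P, Q) = e_{G'}(P, Q). -/
open SimpleGraph

variable {V : Type*}

/-! Cutting the bone `PQ` splits the tree `T` into two sides. Give each class on the side of `P`
the sign `±1` of a proper 2-colouring of `T` (with `P` positive), every other class `0`, and let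
`χ v` be the value of the class of `v`. For an edge `xy` of a graph weakly consistent with `T`,
`χ x + χ y` is `1` if `xy` joins `P` and `Q` and `0` otherwise: within one side the signs of
adjacent classes cancel, and `PQ` is the only bone between the sides. Summing over the edges gives
`e_G(P, Q) = ∑ v, χ v * d v`, which depends on `d` only. -/

open Function

namespace SimpleGraph

variable {V : Type*}

theorem ncard_edgeSet_inter_eq_sum_mul_degree [Fintype V] (G : SimpleGraph V) [DecidableRel G.Adj]
    (F : Set (Sym2 V)) (χ : V → ℤ) (hχ : ∀ x y, G.Adj x y → χ x + χ y = F.indicator 1 s(x, y)) :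
    ((G.edgeSet ∩ F).ncard : ℤ) = ∑ v, χ v * G.degree v := by
  classical
  have hedge : ∀ e ∈ G.edgeFinset, ∑ v with v ∈ e, χ v = F.indicator 1 e := by
    intro e he
    induction e using Sym2.ind with
    | _ x y =>
      have hxy : G.Adj x y := mem_edgeFinset.mp he
      rw [← hχ x y hxy, ← Finset.sum_pair hxy.ne]
      congr 1
      ext v
      simp
  calc ((G.edgeSet ∩ F).ncard : ℤ)
      = ∑ e ∈ G.edgeFinset, F.indicator 1 e := by
        have : G.edgeSet ∩ F = ↑({e ∈ G.edgeFinset | e ∈ F}) := by ext; simp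
        rw [this, Set.ncard_coe_finset]
        simp [Set.indicator_apply, Finset.sum_boole]
    _ = ∑ e ∈ G.edgeFinset, ∑ v with v ∈ e, χ v := (Finset.sum_congr rfl hedge).symm
    _ = ∑ v, ∑ e ∈ G.incidenceFinset v, χ v := by
        simp_rw [incidenceFinset_eq_filter, Finset.sum_filter]
        exact Finset.sum_comm
    _ = ∑ v, χ v * G.degree v := by
        simp [card_incidenceFinset_eq_degree, mul_comm]

theorem Colorable.exists_add_eq_ite_of_isBridge [DecidableEq V] {G : SimpleGraph V}
    (hG : G.Colorable 2) {p q : V} (hpq : G.IsBridge s(p, q)) :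
    ∃ g : V → ℤ, ∀ x y, G.Adj x y → g x + g y = if s(x, y) = s(p, q) then 1 else 0 := by
  classical
  obtain ⟨c⟩ := hG
  set side : Set V := {x | (G.deleteEdges {s(p, q)}).Reachable p x}
  have hq : q ∉ side := isBridge_iff.mp hpq
  have hside : ∀ x y, G.Adj x y → s(x, y) ≠ s(p, q) → x ∈ side → y ∈ side :=
    fun x y hxy he hx => hx.trans (Adj.reachable (by simp [hxy, he]))
  refine ⟨fun x => if x ∈ side then (if c x = c p then 1 else -1) else 0, fun x y hxy => ?_⟩
  by_cases he : s(x, y) = s(p, q)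
  · rcases Sym2.eq_iff.mp he with ⟨rfl, rfl⟩ | ⟨rfl, rfl⟩ <;> simp [he, hq, side]
  · have he' : s(y, x) ≠ s(p, q) := by rwa [Sym2.eq_swap]
    by_cases hx : x ∈ side
    · have hy := hside x y hxy he hx
      have hc : c x ≠ c y := c.valid hxy
      simp only [hx, hy, he, if_true, if_false]
      split_ifs <;> omega
    · have hy : y ∉ side := fun hy => hx (hside y x hxy.symm he' hy)
      simp [hx, hy, he]

end SimpleGraph

section Classes

variable {V C : Type*} {U : C → Set V}

lemma gdeg_eq_degree (G : SimpleGraph V) (v : V) [Fintype (G.neighborSet v)] :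
    gdeg G v = G.degree v := by
  rw [gdeg, Set.ncard_eq_toFinset_card', ← card_neighborFinset_eq_degree, neighborFinset]

lemma eq_of_mem_of_pairwise_disjoint (hU : Pairwise (Disjoint on U)) {A B : C} {v : V}
    (hA : v ∈ U A) (hB : v ∈ U B) : A = B :=
  by_contra fun h => Set.disjoint_left.mp (hU h) hA hB

lemma exists_eq_on_classes {β : Type*} [Zero β] (hU : Pairwise (Disjoint on U)) (g : C → β) :
    ∃ χ : V → β, ∀ A, ∀ v ∈ U A, χ v = g A := by
  classical
  refine ⟨fun v => if h : ∃ A, v ∈ U A then g h.choose else 0, fun A v hv => ?_⟩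
  have h : ∃ A, v ∈ U A := ⟨A, hv⟩
  dsimp only
  rw [dif_pos h, eq_of_mem_of_pairwise_disjoint hU h.choose_spec hv]

lemma exists_sym2_eq_iff_of_mem (hU : Pairwise (Disjoint on U)) {A B P Q : C} {x y : V}
    (hx : x ∈ U A) (hy : y ∈ U B) :
    (∃ p ∈ U P, ∃ q ∈ U Q, s(x, y) = s(p, q)) ↔ s(A, B) = s(P, Q) := by
  constructor
  · rintro ⟨p, hp, q, hq, hxy⟩
    rcases Sym2.eq_iff.mp hxy with ⟨rfl, rfl⟩ | ⟨rfl, rfl⟩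
    · rw [eq_of_mem_of_pairwise_disjoint hU hx hp, eq_of_mem_of_pairwise_disjoint hU hy hq]
    · rw [eq_of_mem_of_pairwise_disjoint hU hx hq, eq_of_mem_of_pairwise_disjoint hU hy hp,
        Sym2.eq_swap]
  · intro hAB
    rcases Sym2.eq_iff.mp hAB with ⟨rfl, rfl⟩ | ⟨rfl, rfl⟩
    · exact ⟨x, hx, y, hy, rfl⟩
    · exact ⟨y, hy, x, hx, Sym2.eq_swap⟩

theorem eCount_eq_sum_mul_of_isRealization [Fintype V] [DecidableEq C]
    (hU : Pairwise (Disjoint on U)) {S : SimpleGraph C} {g : C → ℤ} {P Q : C}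
    (hg : ∀ A B, S.Adj A B → g A + g B = if s(A, B) = s(P, Q) then 1 else 0)
    {χ : V → ℤ} (hχ : ∀ A, ∀ v ∈ U A, χ v = g A) {H : SimpleGraph V} {d : V → ℕ}
    (hd : IsRealization H d) (hH : WeaklyConsistent U S H) :
    (eCount H (U P) (U Q) : ℤ) = ∑ v, χ v * d v := by
  classical
  have hdeg : ∀ v, (d v : ℤ) = H.degree v := fun v => by rw [← hd v, gdeg_eq_degree]
  simp only [hdeg]
  refine H.ncard_edgeSet_inter_eq_sum_mul_degree {e | ∃ p ∈ U P, ∃ q ∈ U Q, e = s(p, q)} χ ?_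
  have hclass : ∀ A B a b, S.Adj A B → a ∈ U A → b ∈ U B →
      χ a + χ b = Set.indicator {e | ∃ p ∈ U P, ∃ q ∈ U Q, e = s(p, q)} 1 s(a, b) := by
    intro A B a b hAB ha hb
    have hiff := exists_sym2_eq_iff_of_mem (P := P) (Q := Q) hU ha hb
    rw [hχ A a ha, hχ B b hb, hg A B hAB]
    by_cases h : s(A, B) = s(P, Q)
    · rw [if_pos h]
      exact (Set.indicator_of_mem (hiff.mpr h) 1).symm
    · rw [if_neg h]
      exact (Set.indicator_of_notMem (mt hiff.mp h) 1).symm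
  intro x y hxy
  obtain ⟨A, B, a, b, hAB, he, ha, hb⟩ := hH s(x, y) hxy
  rcases Sym2.eq_iff.mp he with ⟨rfl, rfl⟩ | ⟨rfl, rfl⟩
  · exact hclass A B x y hAB ha hb
  · rw [add_comm, Sym2.eq_swap]
    exact hclass A B y x hAB ha hb

end Classes

theorem tree_unique_weight_general {V : Type*} {C : Type*} [Fintype V]
    (U : C → Set V)
    (hdis : ∀ P Q : C, P ≠ Q → Disjoint (U P) (U Q))
    (T : SimpleGraph C) (htree : T.IsTree)
    (d : V → ℕ) (G G' : SimpleGraph V)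
    (hG : IsRealization G d) (hG' : IsRealization G' d)
    (hwG : WeaklyConsistent U T G) (hwG' : WeaklyConsistent U T G')
    (P Q : C) (hPQ : T.Adj P Q) :
    eCount G (U P) (U Q) = eCount G' (U P) (U Q) := by
  classical
  have hU : Pairwise (Disjoint on U) := fun A B h => hdis A B h
  obtain ⟨g, hg⟩ := htree.colorable_two.exists_add_eq_ite_of_isBridge
    (isAcyclic_iff_forall_adj_isBridge.mp htree.isAcyclic hPQ)
  obtain ⟨χ, hχ⟩ := exists_eq_on_classes hU g
  exact_mod_cast (eCount_eq_sum_mul_of_isRealization hU hg hχ hG hwG).trans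
    (eCount_eq_sum_mul_of_isRealization hU hg hχ hG' hwG').symm

/-- For a tree skeleton, any two weakly consistent realizations of the same degree sequence
have the same number of edges on every bone. -/
theorem tree_unique_weight {V : Type*} {C : Type*} [Fintype V] [Fintype C]
    (U : C → Set V)
    (hdis : ∀ P Q : C, P ≠ Q → Disjoint (U P) (U Q))
    (hcov : (⋃ P, U P) = Set.univ)
    (T : SimpleGraph C) (htree : T.IsTree)
    (d : V → ℕ) (G G' : SimpleGraph V)
    (hG : IsRealization G d) (hG' : IsRealization G' d)
    (hwG : WeaklyConsistent U T G) (hwG' : WeaklyConsistent U T G')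
    (P Q : C) (hPQ : T.Adj P Q) :
    eCount G (U P) (U Q) = eCount G' (U P) (U Q) :=
  tree_unique_weight_general U hdis T htree d G G' hG hG' hwG hwG' P Q hPQ
end
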